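/- arXiv:2206.06889 — 2 statements merged into one kernel-verified Lean document; each statement's English description precedes it below -/
import Mathlib

section
/- Let ℓ ≥ 1 and J ⊆ ℤ/ℓℤ. If μ is a partition that is a J-core, then Core_ℓ(μ) is also a J-core. -/
/-!
Encode a partition by its beads `λ_r - 1 - r`, placed on the `ℓ` runners of the abacus according
to their residue mod `ℓ`; deleting a removable box of content `b` moves the bead `b` to the empty
position `b - 1`. In a `J`-core every bead on a runner `j ∈ J` has a bead just below it, so
(counting beads above a level far down) runner `j` carries at most as many beads as runner
`j - 1`. Deleting a box leaves `#(beads on runner i) + #(boxes of residue i + 1) - #(boxes of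
residue i)` unchanged, so the runner counts are invariant along the `ℓ`-core process, each of
whose steps deletes one box of every residue. The runners of an `ℓ`-core are closed downwards,
since a bead `b` with `b - ℓ` empty could be moved there, removing `ℓ` boxes of contents
`b - ℓ + 1, …, b`. Hence a `J`-removable box of `Core_ℓ(μ)`, i.e. a bead `b` on a runner in `J`
with `b - 1` empty, would make runner `b` strictly fuller than runner `b - 1` (shift runner
`b - 1` up by one), a contradiction.
-/

namespace CM

/-- The `∞`-residue of a box. -/
def rsd (c : ℕ × ℕ) : ℤ := (c.2 : ℤ) - (c.1 : ℤ)

/-- The `ℓ`-residue of a box. -/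
def res (ℓ : ℕ) (c : ℕ × ℕ) : ZMod ℓ := (rsd c : ZMod ℓ)

/-- `Res_ℓ(μ) ∈ ℤ^(ℤ/ℓℤ)`: the number of boxes of each `ℓ`-residue. -/
def Res (ℓ : ℕ) (μ : YoungDiagram) : ZMod ℓ → ℤ := fun i =>
  ((μ.cells.filter (fun c => res ℓ c = i)).card : ℤ)

/-- The constant vector `δ_ℓ = (1,…,1)`. -/
def delta (ℓ : ℕ) : ZMod ℓ → ℤ := fun _ => 1

/-- A box is removable if deleting it leaves a Young diagram. -/
def IsRemovable (μ : YoungDiagram) (c : ℕ × ℕ) : Prop :=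
  c ∈ μ.cells ∧ ∃ ν : YoungDiagram, ν.cells = μ.cells.erase c

/-- A box is addable if adjoining it yields a Young diagram. -/
def IsAddable (μ : YoungDiagram) (c : ℕ × ℕ) : Prop :=
  c ∉ μ.cells ∧ ∃ ν : YoungDiagram, ν.cells = insert c μ.cells

/-- One step: delete one removable box. -/
def RemoveStep (μ ν : YoungDiagram) : Prop :=
  ∃ c, IsRemovable μ c ∧ ν.cells = μ.cells.erase c

/-- `ν` is obtainable from `μ` by successively deleting removable boxes. -/
def Obtainable (μ ν : YoungDiagram) : Prop :=
  Relation.ReflTransGen RemoveStep μ ν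

/-- `λ` is an `ℓ`-core: no partition obtainable from `λ` by deleting removable boxes
differs from `λ` by exactly `ℓ` boxes of pairwise distinct `ℓ`-residues. -/
def IsCore (ℓ : ℕ) (lam : YoungDiagram) : Prop :=
  ¬ ∃ μ : YoungDiagram, Obtainable lam μ ∧ (lam.cells \ μ.cells).card = ℓ ∧
      Set.InjOn (res ℓ) ↑(lam.cells \ μ.cells)

/-- One step of the `ℓ`-core process: delete (via removable-box deletions) `ℓ` boxes
of pairwise distinct `ℓ`-residues. -/
def CoreStep (ℓ : ℕ) (μ ν : YoungDiagram) : Prop :=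
  Obtainable μ ν ∧ (μ.cells \ ν.cells).card = ℓ ∧
    Set.InjOn (res ℓ) ↑(μ.cells \ ν.cells)

/-- `ν` is the `ℓ`-core of `λ`: it is an `ℓ`-core reached from `λ` by the core process. -/
def ReachesCore (ℓ : ℕ) (lam ν : YoungDiagram) : Prop :=
  Relation.ReflTransGen (CoreStep ℓ) lam ν ∧ IsCore ℓ ν

/-- A `J`-removable box: a removable box whose `ℓ`-residue lies in `J`. -/
def IsJRemovable (ℓ : ℕ) (J : Set (ZMod ℓ)) (μ : YoungDiagram) (c : ℕ × ℕ) : Prop :=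
  IsRemovable μ c ∧ res ℓ c ∈ J

/-- A `J`-core: a partition with no `J`-removable boxes. -/
def IsJCore (ℓ : ℕ) (J : Set (ZMod ℓ)) (μ : YoungDiagram) : Prop :=
  ∀ c, ¬ IsJRemovable ℓ J μ c

/-- One step: delete one `J`-removable box. -/
def JRemoveStep (ℓ : ℕ) (J : Set (ZMod ℓ)) (μ ν : YoungDiagram) : Prop :=
  ∃ c, IsJRemovable ℓ J μ c ∧ ν.cells = μ.cells.erase c

/-- `ν` is a `J`-core of `λ`, obtained by successively deleting `J`-removable boxes. -/
def JReaches (ℓ : ℕ) (J : Set (ZMod ℓ)) (lam ν : YoungDiagram) : Prop :=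
  Relation.ReflTransGen (JRemoveStep ℓ J) lam ν ∧ IsJCore ℓ J ν


open Finset YoungDiagram

/-- The content of the last box of row `r`: the beta-number `λ_r - r` shifted by `-1`. -/
def bead (μ : YoungDiagram) (r : ℕ) : ℤ := (μ.rowLen r : ℤ) - 1 - r

def beads (μ : YoungDiagram) : Set ℤ := Set.range (bead μ)

section Beads

variable {μ ν : YoungDiagram}

lemma bead_strictAnti (μ : YoungDiagram) : StrictAnti (bead μ) := by
  refine strictAnti_nat_of_succ_lt fun r => ?_
  have := μ.rowLen_anti r (r + 1) r.le_succ
  unfold bead; push_cast; omega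

lemma exists_rowLen_eq_zero (μ : YoungDiagram) : ∃ n, μ.rowLen n = 0 := by
  refine ⟨μ.colLen 0, Nat.eq_zero_of_not_pos fun h => ?_⟩
  have := mem_iff_lt_colLen.mp (mem_iff_lt_rowLen.mpr h)
  omega

lemma rowLen_eq_zero_of_le {n q : ℕ} (hn : μ.rowLen n = 0) (hq : n ≤ q) : μ.rowLen q = 0 :=
  Nat.eq_zero_of_le_zero (hn ▸ μ.rowLen_anti n q hq)

lemma rowLen_le_of_cells_subset (h : ν.cells ⊆ μ.cells) (q : ℕ) : ν.rowLen q ≤ μ.rowLen q := by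
  by_contra! hlt
  have := h (mem_iff_lt_rowLen.mpr hlt)
  rw [mem_cells, mem_iff_lt_rowLen] at this
  omega

lemma rowLen_eq_zero_of_cells_subset {n : ℕ} (h : ν.cells ⊆ μ.cells) (hn : μ.rowLen n = 0) :
    ν.rowLen n = 0 :=
  Nat.eq_zero_of_le_zero (hn ▸ rowLen_le_of_cells_subset h n)

lemma mem_beads_of_le {n : ℕ} (hn : μ.rowLen n = 0) {x : ℤ} (hx : x ≤ -1 - n) :
    x ∈ beads μ := by
  refine ⟨(-1 - x).toNat, ?_⟩
  rw [bead, rowLen_eq_zero_of_le hn (by omega)]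
  omega

lemma neg_le_of_notMem_beads {n : ℕ} (hn : μ.rowLen n = 0) {x : ℤ} (hx : x ∉ beads μ) :
    -(n : ℤ) ≤ x :=
  not_lt.mp fun h => hx (mem_beads_of_le hn (by omega))

lemma bead_sub_one_mem_beads_iff {r : ℕ} :
    bead μ r - 1 ∈ beads μ ↔ μ.rowLen (r + 1) = μ.rowLen r := by
  have hanti := μ.rowLen_anti r (r + 1) r.le_succ
  constructor
  · rintro ⟨q, hq⟩
    rcases Nat.lt_or_ge r q with hrq | hqr
    · have := (bead_strictAnti μ).antitone (show r + 1 ≤ q by omega)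
      unfold bead at *
      omega
    · have := (bead_strictAnti μ).antitone hqr
      omega
  · intro h
    exact ⟨r + 1, by unfold bead; rw [h]; push_cast; ring⟩

lemma isRemovable_iff {r s : ℕ} :
    IsRemovable μ (r, s) ↔ s + 1 = μ.rowLen r ∧ μ.rowLen (r + 1) ≤ s := by
  constructor
  · rintro ⟨hmem, ν, hν⟩
    have hmax : ∀ c ∈ μ, (r, s) ≤ c → c = (r, s) := fun c hc hle => by
      by_contra hne
      have := ν.isLowerSet hle (hν ▸ mem_erase.mpr ⟨hne, hc⟩)
      simp [hν] at this
    have hright : (r, s + 1) ∉ μ := fun h => by simpa using hmax _ h (by simp [Prod.mk_le_mk])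
    have hdown : (r + 1, s) ∉ μ := fun h => by simpa using hmax _ h (by simp [Prod.mk_le_mk])
    rw [mem_cells, mem_iff_lt_rowLen] at hmem
    rw [mem_iff_lt_rowLen] at hright hdown
    omega
  · rintro ⟨hs, hdown⟩
    refine ⟨mem_iff_lt_rowLen.mpr (by omega), ⟨μ.cells.erase (r, s), fun d c hcd hd => ?_⟩, rfl⟩
    simp only [coe_erase, Set.mem_sdiff, mem_coe, Set.mem_singleton_iff] at hd ⊢
    refine ⟨μ.isLowerSet hcd hd.1, ?_⟩
    rintro rfl
    obtain ⟨d1, d2⟩ := d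
    obtain ⟨hr, hs'⟩ := Prod.mk_le_mk.mp hcd
    have hd' := mem_iff_lt_rowLen.mp hd.1
    rcases eq_or_ne d1 r with rfl | hne
    · have := hd.2
      simp only [Prod.mk.injEq, true_and] at this
      omega
    · have := μ.rowLen_anti (r + 1) d1 (by omega)
      omega

lemma bead_eq_rsd {r s : ℕ} (hs : s + 1 = μ.rowLen r) : bead μ r = rsd (r, s) := by
  unfold bead rsd; omega

lemma rsd_mem_beads_of_isRemovable {c : ℕ × ℕ} (hc : IsRemovable μ c) :
    rsd c ∈ beads μ ∧ rsd c - 1 ∉ beads μ := by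
  obtain ⟨r, s⟩ := c
  obtain ⟨hs, hdown⟩ := isRemovable_iff.mp hc
  rw [← bead_eq_rsd hs, bead_sub_one_mem_beads_iff]
  exact ⟨⟨r, rfl⟩, by omega⟩

lemma exists_isRemovable_of_mem_beads {b : ℤ} (hb : b ∈ beads μ) (hgap : b - 1 ∉ beads μ) :
    ∃ c, IsRemovable μ c ∧ rsd c = b := by
  obtain ⟨r, rfl⟩ := hb
  have hlt := (μ.rowLen_anti r (r + 1) r.le_succ).lt_of_ne
    (mt bead_sub_one_mem_beads_iff.mpr hgap)
  have hs : μ.rowLen r - 1 + 1 = μ.rowLen r := by omega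
  exact ⟨_, isRemovable_iff.mpr ⟨hs, by omega⟩, (bead_eq_rsd hs).symm⟩

lemma bead_of_cells_eq_erase {r s : ℕ} (hs : s + 1 = μ.rowLen r)
    (hν : ν.cells = μ.cells.erase (r, s)) (q : ℕ) :
    bead ν q = if q = r then bead μ r - 1 else bead μ q := by
  have hrow : ν.rowLen q = if q = r then s else μ.rowLen q := by
    refine eq_of_forall_lt_iff fun t => ?_
    rw [← mem_iff_lt_rowLen, ← mem_cells, hν, mem_erase, mem_cells, mem_iff_lt_rowLen, Ne,
      Prod.mk.injEq]
    split_ifs with hq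
    · subst hq; omega
    · omega
  unfold bead
  rw [hrow]
  split_ifs with hq
  · subst hq; omega
  · rfl

lemma beads_of_isRemovable {c : ℕ × ℕ} (hc : IsRemovable μ c)
    (hν : ν.cells = μ.cells.erase c) :
    beads ν = insert (rsd c - 1) (beads μ \ {rsd c}) := by
  obtain ⟨r, s⟩ := c
  have hs := (isRemovable_iff.mp hc).1
  rw [← bead_eq_rsd hs]
  ext x
  simp only [beads, Set.mem_insert_iff, Set.mem_sdiff, Set.mem_range, Set.mem_singleton_iff,
    bead_of_cells_eq_erase hs hν]
  constructor
  · rintro ⟨q, rfl⟩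
    split_ifs with hq
    · exact .inl rfl
    · exact .inr ⟨⟨q, rfl⟩, fun h => hq ((bead_strictAnti μ).injective h)⟩
  · rintro (rfl | ⟨⟨q, rfl⟩, hq⟩)
    · exact ⟨r, if_pos rfl⟩
    · exact ⟨q, if_neg fun h => hq (by rw [h])⟩

lemma isJCore_iff {ℓ : ℕ} {J : Set (ZMod ℓ)} :
    IsJCore ℓ J μ ↔ ∀ b ∈ beads μ, (b : ZMod ℓ) ∈ J → b - 1 ∈ beads μ := by
  constructor
  · intro h b hb hJ
    by_contra hgap
    obtain ⟨c, hc, rfl⟩ := exists_isRemovable_of_mem_beads hb hgap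
    exact h c ⟨hc, hJ⟩
  · rintro h c ⟨hc, hJ⟩
    obtain ⟨hb, hgap⟩ := rsd_mem_beads_of_isRemovable hc
    exact hgap (h _ hb hJ)

lemma Obtainable.cells_subset (h : Obtainable μ ν) : ν.cells ⊆ μ.cells := by
  induction h with
  | refl => exact subset_rfl
  | tail _ hstep ih =>
    obtain ⟨c, -, hν⟩ := hstep
    exact hν ▸ (erase_subset c _).trans ih

end Beads

section RimHook

variable {lam : YoungDiagram} {b : ℤ}

lemma exists_rimHook_one (hb : b ∈ beads lam) (hgap : b - 1 ∉ beads lam) :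
    ∃ lam', Obtainable lam lam' ∧ beads lam' = insert (b - 1) (beads lam \ {b}) ∧
      #lam'.cells + 1 = #lam.cells ∧ (lam.cells \ lam'.cells).image rsd = Ioc (b - 1) b := by
  obtain ⟨c, hc, rfl⟩ := exists_isRemovable_of_mem_beads hb hgap
  obtain ⟨lam', hlam'⟩ := hc.2
  refine ⟨lam', .single ⟨c, hc, hlam'⟩, beads_of_isRemovable hc hlam',
    hlam' ▸ card_erase_add_one hc.1, ?_⟩
  rw [hlam', sdiff_erase_self hc.1, image_singleton]
  ext x
  simp only [mem_singleton, mem_Ioc]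
  omega

lemma exists_rimHook (m : ℕ) (hb : b ∈ beads lam) (hgap : b - m ∉ beads lam) :
    ∃ lam', Obtainable lam lam' ∧ beads lam' = insert (b - m) (beads lam \ {b}) ∧
      #lam'.cells + m = #lam.cells ∧ (lam.cells \ lam'.cells).image rsd = Ioc (b - m) b := by
  induction m generalizing lam b with
  | zero => exact absurd hb (by simpa using hgap)
  | succ m ih =>
    rcases Nat.eq_zero_or_pos m with rfl | hm
    · simpa using exists_rimHook_one hb (by simpa using hgap)
    push_cast at hgap ⊢
    by_cases h1 : b - 1 ∈ beads lam
    · -- first move the bead `b - 1` down by `m`, then `b` down to `b - 1`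
      obtain ⟨lam1, hob1, hbeads1, hcard1, himage1⟩ := ih h1 (by rwa [sub_sub, add_comm])
      have hb1 : b ∈ beads lam1 := by
        rw [hbeads1]
        exact Set.mem_insert_of_mem _ ⟨hb, by simp only [Set.mem_singleton_iff]; omega⟩
      have hgap1 : b - 1 ∉ beads lam1 := by rw [hbeads1]; simp; omega
      obtain ⟨lam2, hob2, hbeads2, hcard2, himage2⟩ := exists_rimHook_one hb1 hgap1
      refine ⟨lam2, hob1.trans hob2, ?_, by omega, ?_⟩
      · rw [hbeads2, hbeads1]
        ext x
        simp only [Set.mem_insert_iff, Set.mem_sdiff, Set.mem_singleton_iff]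
        grind
      · rw [← sdiff_union_sdiff_cancel hob1.cells_subset hob2.cells_subset, image_union, himage1,
          himage2, Ioc_union_Ioc_eq_Ioc (by omega) (by omega), sub_sub, add_comm]
    · -- first move the bead `b` down to `b - 1`, then `b - 1` down by `m`
      obtain ⟨lam1, hob1, hbeads1, hcard1, himage1⟩ := exists_rimHook_one hb h1
      have hb1 : b - 1 ∈ beads lam1 := by rw [hbeads1]; simp
      have hgap1 : b - 1 - m ∉ beads lam1 := by
        rw [hbeads1, sub_sub, add_comm]
        simp only [Set.mem_insert_iff, Set.mem_sdiff, Set.mem_singleton_iff, not_or]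
        exact ⟨by omega, fun h => hgap h.1⟩
      obtain ⟨lam2, hob2, hbeads2, hcard2, himage2⟩ := ih hb1 hgap1
      refine ⟨lam2, hob1.trans hob2, ?_, by omega, ?_⟩
      · rw [hbeads2, hbeads1]
        ext x
        simp only [Set.mem_insert_iff, Set.mem_sdiff, Set.mem_singleton_iff]
        grind
      · rw [← sdiff_union_sdiff_cancel hob1.cells_subset hob2.cells_subset, image_union, himage1,
          himage2, union_comm, Ioc_union_Ioc_eq_Ioc (by omega) (by omega), sub_sub, add_comm]

end RimHook

section Core

variable {ℓ : ℕ} {ν : YoungDiagram}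

lemma intCast_injOn_Ioc (ℓ : ℕ) (a : ℤ) :
    Set.InjOn (Int.cast : ℤ → ZMod ℓ) (Ioc (a - ℓ) a : Finset ℤ) := by
  intro x hx y hy hxy
  rw [coe_Ioc, Set.mem_Ioc] at hx hy
  have := Int.eq_zero_of_abs_lt_dvd ((ZMod.intCast_eq_intCast_iff_dvd_sub x y ℓ).mp hxy)
    (abs_lt.mpr ⟨by omega, by omega⟩)
  omega

lemma sub_mem_beads_of_isCore (h : IsCore ℓ ν) {b : ℤ} (hb : b ∈ beads ν) : b - ℓ ∈ beads ν := by
  by_contra hgap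
  obtain ⟨lam, hob, -, hcard, himage⟩ := exists_rimHook ℓ hb hgap
  have hsize : #(ν.cells \ lam.cells) = ℓ := by
    rw [card_sdiff_of_subset hob.cells_subset]; omega
  have hrsd : Set.InjOn rsd ↑(ν.cells \ lam.cells) :=
    card_image_iff.mp (by rw [himage, Int.card_Ioc, hsize]; simp)
  refine h ⟨lam, hob, hsize, (intCast_injOn_Ioc ℓ b).comp hrsd fun c hc => ?_⟩
  rw [mem_coe, ← himage]
  exact mem_image_of_mem rsd hc

lemma mem_beads_of_isCore (h : IsCore ℓ ν) {b x : ℤ} (hb : b ∈ beads ν) (hxb : x ≤ b)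
    (hres : (x : ZMod ℓ) = b) : x ∈ beads ν := by
  obtain ⟨q, hq⟩ := (ZMod.intCast_eq_intCast_iff_dvd_sub x b ℓ).mp hres
  obtain ⟨k, rfl⟩ : ∃ k : ℕ, x = b - ℓ * k := by
    rcases Nat.eq_zero_or_pos ℓ with rfl | hℓ
    · exact ⟨0, by simp only [CharP.cast_eq_zero, zero_mul] at hq ⊢; linarith⟩
    · exact ⟨q.toNat, by rw [Int.toNat_of_nonneg (by nlinarith)]; linarith⟩
  clear hxb hres hq
  induction k with
  | zero => simpa using hb
  | succ k ih => simpa [mul_add, ← sub_sub] using sub_mem_beads_of_isCore h ih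

end Core

/-- For `n` past the last row of `μ`, the set of beads `≥ -n`. -/
def window (μ : YoungDiagram) (n : ℕ) : Finset ℤ := (range n).image (bead μ)

def runnerCount (ℓ : ℕ) (μ : YoungDiagram) (n : ℕ) (i : ZMod ℓ) : ℕ :=
  #((window μ n).filter fun x : ℤ => (x : ZMod ℓ) = i)

section Counting

variable {ℓ n : ℕ} {μ ν : YoungDiagram}

lemma mem_window (hn : μ.rowLen n = 0) {x : ℤ} :
    x ∈ window μ n ↔ x ∈ beads μ ∧ -(n : ℤ) ≤ x := by
  simp only [window, beads, mem_image, mem_range, Set.mem_range]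
  constructor
  · rintro ⟨q, hq, rfl⟩
    exact ⟨⟨q, rfl⟩, by unfold bead; omega⟩
  · rintro ⟨⟨q, rfl⟩, hx⟩
    refine ⟨q, Nat.lt_of_not_ge fun hq => ?_, rfl⟩
    rw [bead, rowLen_eq_zero_of_le hn hq] at hx
    omega

lemma window_of_isRemovable {c : ℕ × ℕ} (hc : IsRemovable μ c)
    (hν : ν.cells = μ.cells.erase c) (hn : μ.rowLen n = 0) :
    window ν n = insert (rsd c - 1) ((window μ n).erase (rsd c)) := by
  have hgap := (rsd_mem_beads_of_isRemovable hc).2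
  have hnν := rowLen_eq_zero_of_cells_subset (hν ▸ erase_subset c _) hn
  ext x
  rw [mem_window hnν, beads_of_isRemovable hc hν, mem_insert, mem_erase, mem_window hn]
  simp only [Set.mem_insert_iff, Set.mem_sdiff, Set.mem_singleton_iff]
  constructor
  · rintro ⟨rfl | ⟨hx, hxc⟩, hxn⟩
    · exact .inl rfl
    · exact .inr ⟨hxc, hx, hxn⟩
  · rintro (rfl | ⟨hxc, hx, hxn⟩)
    · exact ⟨.inl rfl, neg_le_of_notMem_beads hn hgap⟩
    · exact ⟨.inr ⟨hx, hxc⟩, hxn⟩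

lemma runnerCount_of_isRemovable {c : ℕ × ℕ} (hc : IsRemovable μ c)
    (hν : ν.cells = μ.cells.erase c) (hn : μ.rowLen n = 0) (i : ZMod ℓ) :
    (runnerCount ℓ ν n i : ℤ) = runnerCount ℓ μ n i - (if res ℓ c = i then 1 else 0)
      + (if res ℓ c = i + 1 then 1 else 0) := by
  obtain ⟨hb, hgap⟩ := rsd_mem_beads_of_isRemovable hc
  have hcast : ((rsd c - 1 : ℤ) : ZMod ℓ) = i ↔ res ℓ c = i + 1 := by
    rw [res, Int.cast_sub, Int.cast_one, sub_eq_iff_eq_add]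
  simp only [runnerCount, card_filter, Nat.cast_sum, Nat.cast_ite, Nat.cast_one, Nat.cast_zero]
  rw [window_of_isRemovable hc hν hn,
    sum_insert fun h => hgap ((mem_window hn).1 (mem_of_mem_erase h)).1,
    sum_erase_eq_sub ((mem_window hn).2 ⟨hb, by linarith [neg_le_of_notMem_beads hn hgap]⟩)]
  simp only [hcast, show ((rsd c : ℤ) : ZMod ℓ) = res ℓ c from rfl]
  ring

lemma Res_of_cells_eq_erase {c : ℕ × ℕ} (hc : c ∈ μ.cells) (hν : ν.cells = μ.cells.erase c)
    (i : ZMod ℓ) : Res ℓ ν i = Res ℓ μ i - if res ℓ c = i then 1 else 0 := by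
  simp only [Res, card_filter, Nat.cast_sum, Nat.cast_ite, Nat.cast_one, Nat.cast_zero]
  rw [hν, sum_erase_eq_sub hc]

/-- Deleting a box of content `b` moves a bead from runner `b` to runner `b - 1`. -/
lemma runnerCount_add_Res_of_obtainable (h : Obtainable μ ν) (hn : μ.rowLen n = 0)
    (i : ZMod ℓ) :
    (runnerCount ℓ ν n i : ℤ) + Res ℓ ν (i + 1) - Res ℓ ν i
      = runnerCount ℓ μ n i + Res ℓ μ (i + 1) - Res ℓ μ i := by
  induction h with
  | refl => rfl
  | @tail lam ν hlam hstep ih =>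
    obtain ⟨c, hc, hν⟩ := hstep
    rw [runnerCount_of_isRemovable hc hν
        (rowLen_eq_zero_of_cells_subset (Obtainable.cells_subset hlam) hn),
      Res_of_cells_eq_erase hc.1 hν, Res_of_cells_eq_erase hc.1 hν, ← ih]
    ring

lemma card_filter_eq_one_of_injOn {α β : Type*} [Fintype β] [DecidableEq β] {s : Finset α}
    {f : α → β} (hf : Set.InjOn f s) (hs : #s = Fintype.card β) (y : β) :
    #(s.filter fun x => f x = y) = 1 := by
  have himage : s.image f = univ := eq_univ_of_card _ (by rw [card_image_of_injOn hf, hs])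
  obtain ⟨x, hx, rfl⟩ := mem_image.mp (himage ▸ mem_univ y)
  exact card_eq_one.mpr ⟨x, eq_singleton_iff_unique_mem.mpr
    ⟨mem_filter.mpr ⟨hx, rfl⟩, fun z hz => hf (mem_filter.mp hz).1 hx (mem_filter.mp hz).2⟩⟩

lemma Res_of_coreStep [NeZero ℓ] (h : CoreStep ℓ μ ν) (i : ZMod ℓ) :
    Res ℓ ν i = Res ℓ μ i - 1 := by
  obtain ⟨hob, hcard, hinj⟩ := h
  have hμ : μ.cells = ν.cells ∪ (μ.cells \ ν.cells) :=
    (union_sdiff_of_subset hob.cells_subset).symm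
  simp only [Res]
  rw [hμ, filter_union, card_union_of_disjoint (disjoint_filter_filter disjoint_sdiff),
    card_filter_eq_one_of_injOn hinj (by rw [hcard, ZMod.card]) i]
  push_cast
  ring

lemma runnerCount_eq_of_reachesCore [NeZero ℓ] (h : Relation.ReflTransGen (CoreStep ℓ) μ ν)
    (hn : μ.rowLen n = 0) (i : ZMod ℓ) : runnerCount ℓ ν n i = runnerCount ℓ μ n i := by
  induction h using Relation.ReflTransGen.head_induction_on with
  | refl => rfl
  | head hstep _ ih =>
    rw [ih (rowLen_eq_zero_of_cells_subset hstep.1.cells_subset hn)]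
    have := runnerCount_add_Res_of_obtainable (ℓ := ℓ) hstep.1 hn i
    rw [Res_of_coreStep hstep, Res_of_coreStep hstep] at this
    omega

lemma runnerCount_le_of_isJCore {J : Set (ZMod ℓ)} (hμ : IsJCore ℓ J μ) {j : ZMod ℓ}
    (hj : j ∈ J) (hn : μ.rowLen n = 0) :
    runnerCount ℓ μ n j ≤ runnerCount ℓ μ (n + 1) (j - 1) := by
  refine card_le_card_of_injOn (· - 1) (fun x hx => ?_) sub_left_injective.injOn
  rw [mem_coe, mem_filter, mem_window hn] at hx
  obtain ⟨⟨hx, hxn⟩, rfl⟩ := hx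
  show x - 1 ∈ _
  rw [mem_coe, mem_filter, mem_window (rowLen_eq_zero_of_le hn (Nat.le_add_right n 1))]
  push_cast
  exact ⟨⟨isJCore_iff.mp hμ x hx hj, by omega⟩, rfl⟩

lemma runnerCount_lt_of_isCore (hν : IsCore ℓ ν) {b : ℤ} (hb : b ∈ beads ν)
    (hgap : b - 1 ∉ beads ν) (hn : ν.rowLen n = 0) :
    runnerCount ℓ ν (n + 1) (b - 1) < runnerCount ℓ ν n b := by
  have hbw : b ∈ (window ν n).filter fun x : ℤ => (x : ZMod ℓ) = b :=
    mem_filter.mpr ⟨(mem_window hn).mpr ⟨hb, by linarith [neg_le_of_notMem_beads hn hgap]⟩, rfl⟩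
  refine (card_le_card_of_injOn (· + 1) (fun x hx => ?_) (add_left_injective 1).injOn).trans_lt
    (card_erase_lt_of_mem hbw)
  rw [mem_coe, mem_filter, mem_window (rowLen_eq_zero_of_le hn (Nat.le_add_right n 1))] at hx
  obtain ⟨⟨hx, hxn⟩, hxres⟩ := hx
  -- runner `b - 1` is closed downwards but misses `b - 1`
  have hxb : x < b - 1 := lt_of_not_ge fun h =>
    hgap (mem_beads_of_isCore hν hx h (by push_cast; exact hxres.symm))
  have hres : ((x + 1 : ℤ) : ZMod ℓ) = b := by push_cast; rw [hxres]; ring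
  show x + 1 ∈ _
  rw [mem_coe, mem_erase, mem_filter, mem_window hn]
  exact ⟨by omega, ⟨mem_beads_of_isCore hν hb (by omega) hres, by omega⟩, hres⟩

end Counting

/-- If `μ` is a `J`-core, then so is its `ℓ`-core `Core_ℓ(μ)`. -/
theorem lcore_of_jcore_is_jcore (ℓ : ℕ) [NeZero ℓ] (J : Set (ZMod ℓ)) (μ ν : YoungDiagram)
    (hμ : IsJCore ℓ J μ) (hν : ReachesCore ℓ μ ν) : IsJCore ℓ J ν := by
  obtain ⟨hreach, hcore⟩ := hν
  rw [isJCore_iff]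
  intro b hb hJ
  by_contra hgap
  obtain ⟨n, hn⟩ := exists_rowLen_eq_zero μ
  have hsub : ν.cells ⊆ μ.cells := Obtainable.cells_subset (hreach.lift' id fun _ _ h => h.1)
  have hle := runnerCount_le_of_isJCore hμ hJ hn
  have hlt := runnerCount_lt_of_isCore hcore hb hgap (rowLen_eq_zero_of_cells_subset hsub hn)
  rw [runnerCount_eq_of_reachesCore hreach hn,
    runnerCount_eq_of_reachesCore hreach (rowLen_eq_zero_of_le hn (Nat.le_add_right n 1))] at hlt
  omega

end CM
end

section
/- Let ℓ ≥ 2, J ⊆ ℤ/ℓℤ, and let θ ∈ ℂ^(ℤ/ℓℤ) be J-standard with Σ_{i ∈ ℤ/ℓℤ} θ_i ≠ 0. If the partition μ is a J-core, then the framed θ-representation A_μ is simple. -/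
namespace CM

/-- The (non-linear) action of the simple reflection `s_j` on `ℤ^(ℤ/ℓℤ)`. -/
def sInt (ℓ : ℕ) (j : ZMod ℓ) (d : ZMod ℓ → ℤ) : ZMod ℓ → ℤ := fun i =>
  if i = j then (if j = 0 then 1 else 0) + d (j + 1) + d (j - 1) - d j else d i

/-- The linear action of the simple reflection `s_j` on `ℂ^(ℤ/ℓℤ)`.
For `i ≠ j` the coefficient of `θ j` is the number of arrows between `i` and `j`
(which is `2` when `ℓ = 2`). -/
def sC (ℓ : ℕ) (j : ZMod ℓ) (θ : ZMod ℓ → ℂ) : ZMod ℓ → ℂ := fun i =>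
  if i = j then -θ j
  else θ i + ((if i = j - 1 then 1 else 0) + (if i = j + 1 then 1 else 0) : ℂ) * θ j

lemma sC_sC (ℓ : ℕ) (j : ZMod ℓ) (θ : ZMod ℓ → ℂ) : sC ℓ j (sC ℓ j θ) = θ := by
  funext i
  by_cases h : i = j
  · subst h; simp [sC]
  · simp [sC, h]

/-- `s_j` as a bijection of `ℂ^(ℤ/ℓℤ)`. -/
def sPerm (ℓ : ℕ) (j : ZMod ℓ) : Equiv.Perm (ZMod ℓ → ℂ) :=
  ⟨sC ℓ j, sC ℓ j, fun θ => sC_sC ℓ j θ, fun θ => sC_sC ℓ j θ⟩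

/-- The group generated by the operators `s_j`, `j ∈ ℤ/ℓℤ`. -/
def Wgrp (ℓ : ℕ) : Subgroup (Equiv.Perm (ZMod ℓ → ℂ)) :=
  Subgroup.closure (Set.range (sPerm ℓ))

/-- The subgroup generated by the operators `s_j`, `j ∈ J`. -/
def WJ (ℓ : ℕ) (J : Set (ZMod ℓ)) : Subgroup (Equiv.Perm (ZMod ℓ → ℂ)) :=
  Subgroup.closure (sPerm ℓ '' J)

/-- `θ` is `J`-standard if its stabilizer in `W` is exactly `W_J`. -/
def JStandard (ℓ : ℕ) (J : Set (ZMod ℓ)) (θ : ZMod ℓ → ℂ) : Prop :=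
  ∀ w ∈ Wgrp ℓ, ((w : (ZMod ℓ → ℂ) → (ZMod ℓ → ℂ)) θ = θ ↔ w ∈ WJ ℓ J)

/-- `θ` extended to `ℤ` by `θ_j = θ_{j mod ℓ}`. -/
def θZ (ℓ : ℕ) (θ : ZMod ℓ → ℂ) (j : ℤ) : ℂ := θ (j : ZMod ℓ)

/-- The sum `θ_a + θ_{a+1} + ⋯ + θ_b`. -/
noncomputable def Ssum (ℓ : ℕ) (θ : ZMod ℓ → ℂ) (a b : ℤ) : ℂ :=
  ∑ i ∈ Finset.Icc a b, θZ ℓ θ i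

/-- The (0-indexed) hook number of a box. -/
def hk (c : ℕ × ℕ) : ℕ := min c.1 c.2

/-- The arm length `a_r` of the `r`-th hook (`r` 0-indexed). -/
def arm (μ : YoungDiagram) (r : ℕ) : ℤ := (μ.rowLen r : ℤ) - r - 1

/-- The leg length `b_r` of the `r`-th hook (`r` 0-indexed). -/
def leg (μ : YoungDiagram) (r : ℕ) : ℤ := (μ.colLen r : ℤ) - r - 1

/-- `β_r = θ_{-b_r} + ⋯ + θ_{a_r}`. -/
noncomputable def beta (ℓ : ℕ) (θ : ZMod ℓ → ℂ) (μ : YoungDiagram) (r : ℕ) : ℂ :=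
  Ssum ℓ θ (-(leg μ r)) (arm μ r)

/-- The underlying vector space of `A_μ`, with basis indexed by the boxes of `μ`:
the box of hook number `r` and `∞`-residue `j` corresponds to the basis vector `v_{r,j}`. -/
abbrev V (μ : YoungDiagram) : Type := (↥μ.cells → ℂ)

/-- Matrix coefficient of `Y`: the coefficient of `v_{hk c', rsd c'}` in `Y(v_{hk c, rsd c})`. -/
noncomputable def cY (ℓ : ℕ) (θ : ZMod ℓ → ℂ) (μ : YoungDiagram) (c c' : ℕ × ℕ) : ℂ :=
  if rsd c' = rsd c + 1 then
    (if rsd c < 0 then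
       (if hk c' = hk c then Ssum ℓ θ (-(leg μ (hk c))) (rsd c)
        else if hk c < hk c' then beta ℓ θ μ (hk c') else 0)
     else
       (if hk c' = hk c then -Ssum ℓ θ (rsd c + 1) (arm μ (hk c))
        else if hk c' < hk c then -(beta ℓ θ μ (hk c')) else 0))
  else 0

/-- Matrix coefficient of `X`: `X(v_{r,j}) = v_{r,j-1}` (or `0`). -/
def cX (c c' : ℕ × ℕ) : ℂ :=
  if hk c' = hk c ∧ rsd c' = rsd c - 1 then 1 else 0

/-- The linear map on `V μ` with matrix coefficients `K`. -/
noncomputable def matMap (μ : YoungDiagram) (K : ℕ × ℕ → ℕ × ℕ → ℂ) :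
    V μ →ₗ[ℂ] V μ where
  toFun f := fun c' => ∑ c : ↥μ.cells, K c c' * f c
  map_add' f g := by
    funext c'
    simp only [Pi.add_apply, mul_add, Finset.sum_add_distrib]
  map_smul' a f := by
    funext c'
    simp only [Pi.smul_apply, smul_eq_mul, RingHom.id_apply, Finset.mul_sum]
    exact Finset.sum_congr rfl fun c _ => by ring

/-- The map `X` of the representation `A_μ`. -/
noncomputable def Xmap (μ : YoungDiagram) : V μ →ₗ[ℂ] V μ := matMap μ cX

/-- The map `Y` of the representation `A_μ`. -/
noncomputable def Ymap (ℓ : ℕ) (θ : ZMod ℓ → ℂ) (μ : YoungDiagram) : V μ →ₗ[ℂ] V μ :=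
  matMap μ (cY ℓ θ μ)

/-- The map `x` of the representation `A_μ`: `x(1) = -∑_r β_r v_{r,0}`. -/
noncomputable def xmap (ℓ : ℕ) (θ : ZMod ℓ → ℂ) (μ : YoungDiagram) : ℂ →ₗ[ℂ] V μ where
  toFun z := fun c => if rsd (c : ℕ × ℕ) = 0 then -(beta ℓ θ μ (hk (c : ℕ × ℕ))) * z else 0
  map_add' z w := by
    funext c
    by_cases h : rsd (c : ℕ × ℕ) = 0 <;> simp [h] <;> ring
  map_smul' a z := by
    funext c
    by_cases h : rsd (c : ℕ × ℕ) = 0 <;> simp [h] <;> ring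

/-- The map `y` of the representation `A_μ`: `y(v_{r,0}) = 1`, `y(v_{r,j}) = 0` for `j ≠ 0`. -/
noncomputable def ymap (μ : YoungDiagram) : V μ →ₗ[ℂ] ℂ where
  toFun f := ∑ c : ↥μ.cells, if rsd (c : ℕ × ℕ) = 0 then f c else 0
  map_add' f g := by
    rw [← Finset.sum_add_distrib]
    exact Finset.sum_congr rfl fun c _ => by
      by_cases h : rsd (c : ℕ × ℕ) = 0 <;> simp [h]
  map_smul' a f := by
    simp only [RingHom.id_apply, smul_eq_mul, Finset.mul_sum]
    exact Finset.sum_congr rfl fun c _ => by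
      by_cases h : rsd (c : ℕ × ℕ) = 0 <;> simp [h]

/-- The degree-`j` graded piece `V_j` of `V μ` (spanned by the `v_{r,j}`). -/
noncomputable def Vgr (μ : YoungDiagram) (j : ℤ) : Submodule ℂ (V μ) where
  carrier := {f | ∀ c : ↥μ.cells, rsd (c : ℕ × ℕ) ≠ j → f c = 0}
  add_mem' := fun {f g} hf hg c hc => by
    simp only [Pi.add_apply, hf c hc, hg c hc, add_zero]
  zero_mem' := fun c _ => rfl
  smul_mem' := fun a {f} hf c hc => by
    simp only [Pi.smul_apply, hf c hc, smul_zero]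

/-- The vertex space `V'_i = ⊕_{j ≡ i mod ℓ} V_j` of `A_μ`. -/
noncomputable def Vmod (ℓ : ℕ) (μ : YoungDiagram) (i : ZMod ℓ) : Submodule ℂ (V μ) where
  carrier := {f | ∀ c : ↥μ.cells, res ℓ (c : ℕ × ℕ) ≠ i → f c = 0}
  add_mem' := fun {f g} hf hg c hc => by
    simp only [Pi.add_apply, hf c hc, hg c hc, add_zero]
  zero_mem' := fun c _ => rfl
  smul_mem' := fun a {f} hf c hc => by
    simp only [Pi.smul_apply, hf c hc, smul_zero]

/-!
Both alternatives reduce to a generation statement: a subspace of `V` stable under `X` and `Y`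
and containing `x(1)` is everything. (Transposed, for `Xᵀ`, `Yᵀ` and the covector of `y`, it shows
that the annihilator of a subrepresentation with `U_∞ = 0` is everything.) The powers of `X` turn
`x(1)` into `∑_r β_r v_{r,j}` for `j ≤ 0`, and one climbs from content (`∞`-residue) `j - 1` to
`j` with `Y`: ordered by hooks, the vectors `Y v_{r,j-1}` and `∑_r β_r v_{r,j}` give two
triangular systems in the `v_{r,j}` whose diagonal entries are the parts of `β_r` below and above
the cut at `j`.

One of the two systems is invertible because of the standardness of `θ`: an interval with
vanishing sum of `θ` is a real root orthogonal to `θ`, whose reflection then lies in `W_J`, and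
this forces all residues of the interval into `J`. Vanishing of a lower part of one hook and an
upper part of another would thus put all residues of a hook into `J`, but every hook of a
`J`-core contains a removable box, whose residue is not in `J`.
-/

section IntervalSums

variable {ℓ : ℕ} (θ : ZMod ℓ → ℂ)

lemma Ssum_eq_zero_of_lt {p q : ℤ} (h : q < p) : Ssum ℓ θ p q = 0 := by
  rw [Ssum, Finset.Icc_eq_empty (by omega), Finset.sum_empty]

lemma Ssum_self (p : ℤ) : Ssum ℓ θ p p = θ p := by
  rw [Ssum, Finset.Icc_self, Finset.sum_singleton, θZ]

lemma Ssum_add_one_right {p q : ℤ} (h : p ≤ q + 1) :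
    Ssum ℓ θ p (q + 1) = Ssum ℓ θ p q + θ ((q + 1 : ℤ) : ZMod ℓ) := by
  rw [Ssum, ← Finset.insert_Icc_right_eq_Icc_add_one h,
    Finset.sum_insert (by simp), add_comm, θZ, Ssum]

lemma Ssum_split {p m q : ℤ} (h₁ : p ≤ m + 1) (h₂ : m ≤ q) :
    Ssum ℓ θ p q = Ssum ℓ θ p m + Ssum ℓ θ (m + 1) q := by
  rw [Ssum, Ssum, Ssum, ← Finset.sum_union]
  · congr 1
    ext x
    simp only [Finset.mem_union, Finset.mem_Icc]
    omega
  · exact Finset.disjoint_left.2 fun x hx hx' => by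
      rw [Finset.mem_Icc] at hx hx'
      omega

lemma Ssum_period [NeZero ℓ] (p : ℤ) : Ssum ℓ θ p (p + ℓ - 1) = ∑ i, θ i := by
  have hinj : Set.InjOn (Int.cast : ℤ → ZMod ℓ) (Finset.Icc p (p + ℓ - 1)) := by
    intro x hx y hy hxy
    have hdvd := (ZMod.intCast_eq_intCast_iff_dvd_sub x y ℓ).1 hxy
    simp only [Finset.coe_Icc, Set.mem_Icc] at hx hy
    have := Int.eq_zero_of_abs_lt_dvd hdvd (by rw [abs_lt]; omega)
    omega
  have himage : (Finset.Icc p (p + ℓ - 1)).image (Int.cast : ℤ → ZMod ℓ) = Finset.univ := by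
    apply Finset.eq_univ_of_card
    rw [Finset.card_image_of_injOn hinj, Int.card_Icc, ZMod.card]
    omega
  rw [Ssum, ← himage, Finset.sum_image hinj]
  rfl

lemma Ssum_mul_period [NeZero ℓ] (p : ℤ) (t : ℕ) :
    Ssum ℓ θ p (p + ℓ * t - 1) = t * ∑ i, θ i := by
  induction t with
  | zero => simpa using Ssum_eq_zero_of_lt θ (show p - 1 < p by omega)
  | succ t ih =>
    have hℓt : (0 : ℤ) ≤ ℓ * t := by positivity
    rw [Ssum_split θ (m := p + ℓ * t - 1) (by omega) (by push_cast; linarith), ih,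
      show p + ℓ * (t + 1 : ℕ) - 1 = p + ℓ * t - 1 + 1 + ℓ - 1 by push_cast; ring,
      Ssum_period]
    push_cast
    ring

end IntervalSums

section Reflections

variable {ℓ : ℕ}

/-- The discrete derivative of `edgeInd ℓ j` is `(s_j θ - θ) / θ_j` (`sC_apply_eq`), so interval
sums of `s_j θ` telescope (`Ssum_sC`). -/
noncomputable def edgeInd (ℓ : ℕ) (j x : ZMod ℓ) : ℂ :=
  (if x = j then 1 else 0) - (if x = j + 1 then 1 else 0)

lemma add_one_ne_self (hℓ : 2 ≤ ℓ) (j : ZMod ℓ) : j + 1 ≠ j := by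
  have : Fact (1 < ℓ) := ⟨hℓ⟩
  simp

lemma edgeInd_self (hℓ : 2 ≤ ℓ) (j : ZMod ℓ) : edgeInd ℓ j j = 1 := by
  simp [edgeInd, (add_one_ne_self hℓ j).symm]

lemma edgeInd_add_one_self (hℓ : 2 ≤ ℓ) (j : ZMod ℓ) : edgeInd ℓ j (j + 1) = -1 := by
  simp [edgeInd, add_one_ne_self hℓ j]

lemma sC_apply_eq (hℓ : 2 ≤ ℓ) (j : ZMod ℓ) (φ : ZMod ℓ → ℂ) (x : ZMod ℓ) :
    sC ℓ j φ x = φ x + (edgeInd ℓ j (x + 1) - edgeInd ℓ j x) * φ j := by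
  have : Fact (1 < ℓ) := ⟨hℓ⟩
  by_cases hx : x = j
  · subst hx
    simp only [sC, ↓reduceIte, edgeInd, add_eq_left, one_ne_zero, zero_sub, left_eq_add,
      sub_zero]
    ring
  · simp [sC, edgeInd, hx, ← eq_sub_iff_add_eq]

lemma sC_add_smul (j : ZMod ℓ) (φ ψ : ZMod ℓ → ℂ) (c : ℂ) :
    sC ℓ j (φ + c • ψ) = sC ℓ j φ + c • sC ℓ j ψ := by
  funext x
  simp only [sC, Pi.add_apply, Pi.smul_apply, smul_eq_mul]
  split_ifs <;> ring

lemma Ssum_sC (hℓ : 2 ≤ ℓ) (j : ZMod ℓ) (φ : ZMod ℓ → ℂ) {p q : ℤ} (h : p - 1 ≤ q) :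
    Ssum ℓ (sC ℓ j φ) p q
      = Ssum ℓ φ p q + (edgeInd ℓ j ((q + 1 : ℤ) : ZMod ℓ) - edgeInd ℓ j (p : ZMod ℓ)) * φ j := by
  induction q, h using Int.leInduction with
  | base => simp [Ssum_eq_zero_of_lt _ (show p - 1 < p by omega)]
  | succ q hq ih =>
    rw [Ssum_add_one_right _ (by omega), Ssum_add_one_right _ (by omega), ih, sC_apply_eq hℓ]
    push_cast
    ring

lemma intCast_add_natCast_eq_self_iff (p : ℤ) (k : ℕ) : ((p + k : ℤ) : ZMod ℓ) = p ↔ ℓ ∣ k := by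
  push_cast
  rw [add_eq_left, ZMod.natCast_eq_zero_iff]

lemma sPerm_mem_Wgrp (j : ZMod ℓ) : sPerm ℓ j ∈ Wgrp ℓ :=
  Subgroup.subset_closure ⟨j, rfl⟩

lemma sC_ne_zero (j : ZMod ℓ) {u : ZMod ℓ → ℂ} (hu : u ≠ 0) : sC ℓ j u ≠ 0 := by
  intro h
  apply hu
  rw [← sC_sC ℓ j u, h]
  funext x
  simp [sC]

lemma exists_transvection_of_comp_sC {f g : (ZMod ℓ → ℂ) → ℂ} (j : ZMod ℓ)
    (hfg : ∀ φ, f (sC ℓ j φ) = g φ) (h : ∃ w ∈ Wgrp ℓ, ∃ u ≠ 0, ∀ φ, w φ = φ + f φ • u) :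
    ∃ w ∈ Wgrp ℓ, ∃ u ≠ 0, ∀ φ, w φ = φ + g φ • u := by
  obtain ⟨w, hw, u, hu, hwu⟩ := h
  refine ⟨sPerm ℓ j * w * sPerm ℓ j, mul_mem (mul_mem (sPerm_mem_Wgrp j) hw) (sPerm_mem_Wgrp j),
    sC ℓ j u, sC_ne_zero j hu, fun φ => ?_⟩
  change sC ℓ j (w (sC ℓ j φ)) = _
  rw [hwu, sC_add_smul, sC_sC, hfg]

lemma Ssum_sC_left (hℓ : 2 ≤ ℓ) {m : ℕ} (hm : ℓ ∣ m + 1) (p : ℤ) (φ : ZMod ℓ → ℂ) :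
    Ssum ℓ (sC ℓ p φ) (p + 1) (p + 1 + m - 1) = Ssum ℓ φ p (p + (m + 2 : ℕ) - 1) := by
  have hend : ((p + 1 + m - 1 + 1 : ℤ) : ZMod ℓ) = p := by
    rw [← intCast_add_natCast_eq_self_iff p (m + 1)] at hm
    rw [← hm]
    push_cast
    ring
  rw [Ssum_sC hℓ _ _ (by omega), hend, Int.cast_add, Int.cast_one, edgeInd_self hℓ,
    edgeInd_add_one_self hℓ, Ssum_split φ (p := p) (m := p) (q := p + ((m + 2 : ℕ) : ℤ) - 1)
      (by omega) (by omega), Ssum_self,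
    show p + ((m + 2 : ℕ) : ℤ) - 1 = p + 1 + m - 1 + 1 by push_cast; ring,
    Ssum_add_one_right _ (by omega), hend]
  ring

lemma Ssum_sC_right (hℓ : 2 ≤ ℓ) {m : ℕ} (hm : ¬ ℓ ∣ m + 1) (hm' : ¬ ℓ ∣ m + 2) (p : ℤ)
    (φ : ZMod ℓ → ℂ) :
    Ssum ℓ (sC ℓ ((p + (m + 1 : ℕ) : ℤ) : ZMod ℓ) φ) p (p + (m + 1 : ℕ) - 1)
      = Ssum ℓ φ p (p + (m + 2 : ℕ) - 1) := by
  set j : ZMod ℓ := ((p + (m + 1 : ℕ) : ℤ) : ZMod ℓ) with hj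
  have hp : edgeInd ℓ j p = 0 := by
    have h₁ : (p : ZMod ℓ) ≠ j := fun h =>
      hm ((intCast_add_natCast_eq_self_iff p _).1 (hj ▸ h.symm))
    have h₂ : (p : ZMod ℓ) ≠ j + 1 := fun h => hm' ((intCast_add_natCast_eq_self_iff p _).1 (by
      rw [hj] at h
      push_cast at h ⊢
      linear_combination -h))
    simp [edgeInd, h₁, h₂]
  rw [Ssum_sC hℓ _ _ (by omega), hp, sub_add_cancel, ← hj, edgeInd_self hℓ,
    show p + ((m + 2 : ℕ) : ℤ) - 1 = p + ((m + 1 : ℕ) : ℤ) - 1 + 1 by push_cast; ring,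
    Ssum_add_one_right _ (by omega), sub_add_cancel, ← hj, sub_zero, one_mul]

/-- The reflection in the real root of an interval of length `n`. Conjugating by the simple
reflection at the right end shortens the interval by one; when the shorter length would be divisible
by `ℓ`, conjugating by the one at the left end shortens it by two instead. -/
lemma exists_reflection (hℓ : 2 ≤ ℓ) (n : ℕ) (hn : ¬ ℓ ∣ n) (p : ℤ) :
    ∃ w ∈ Wgrp ℓ, ∃ u ≠ 0, ∀ φ, w φ = φ + Ssum ℓ φ p (p + n - 1) • u := by
  induction n using Nat.strong_induction_on generalizing p with
  | _ n ih =>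
  match n, hn with
  | 0, hn => exact absurd (dvd_zero ℓ) hn
  | 1, _ =>
    refine ⟨sPerm ℓ p, sPerm_mem_Wgrp _, fun x => edgeInd ℓ p (x + 1) - edgeInd ℓ p x,
      fun h => ?_, fun φ => funext fun x => ?_⟩
    · have := congrFun h p
      rw [edgeInd_self hℓ, edgeInd_add_one_self hℓ] at this
      norm_num at this
    · change sC ℓ p φ x = _
      simp only [Nat.cast_one, add_sub_cancel_right, Ssum_self, Pi.add_apply,
        Pi.smul_apply, smul_eq_mul, sC_apply_eq hℓ]
      ring
  | m + 2, hn =>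
    by_cases hm : ℓ ∣ m + 1
    · have hm' : ¬ ℓ ∣ m := fun h =>
        absurd (Nat.le_of_dvd one_pos ((Nat.dvd_add_right h).1 hm)) (by omega)
      exact exists_transvection_of_comp_sC _ (Ssum_sC_left hℓ hm p) (ih m (by omega) hm' (p + 1))
    · exact exists_transvection_of_comp_sC _ (Ssum_sC_right hℓ hm hn p) (ih (m + 1) (by omega) hm p)

end Reflections

section Standard

variable {ℓ : ℕ} {J : Set (ZMod ℓ)} {θ : ZMod ℓ → ℂ}

lemma apply_eq_self_of_mem_WJ {w : Equiv.Perm (ZMod ℓ → ℂ)} (hw : w ∈ WJ ℓ J)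
    {φ : ZMod ℓ → ℂ} (hφ : ∀ i ∈ J, φ i = 0) : w φ = φ := by
  induction hw using Subgroup.closure_induction with
  | mem g hg =>
    obtain ⟨j, hj, rfl⟩ := hg
    funext x
    change sC ℓ j φ x = φ x
    by_cases hx : x = j
    · subst hx
      simp [sC, hφ x hj]
    · simp [sC, hx, hφ j hj]
  | one => rfl
  | mul g h _ _ hg hh => rw [Equiv.Perm.mul_apply, hh, hg]
  | inv g _ hg => rw [Equiv.Perm.inv_eq_iff_eq, hg]

lemma mem_of_Ssum_eq_zero [NeZero ℓ] (hℓ : 2 ≤ ℓ) (hst : JStandard ℓ J θ)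
    (ha : ∑ i, θ i ≠ 0) {p q : ℤ} (h0 : Ssum ℓ θ p q = 0) {x : ℤ} (hpx : p ≤ x) (hxq : x ≤ q) :
    (x : ZMod ℓ) ∈ J := by
  obtain ⟨n, rfl⟩ : ∃ n : ℕ, q = p + n - 1 := ⟨(q + 1 - p).toNat, by omega⟩
  by_cases hn : ℓ ∣ n
  · obtain ⟨t, rfl⟩ := hn
    rw [Nat.cast_mul, Ssum_mul_period] at h0
    have ht : t ≠ 0 := by
      rintro rfl
      simp only [mul_zero, CharP.cast_eq_zero, add_zero] at hxq
      omega
    exact absurd h0 (mul_ne_zero (Nat.cast_ne_zero.2 ht) ha)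
  obtain ⟨w, hw, u, hu, hwu⟩ := exists_reflection hℓ n hn p
  have hwJ : w ∈ WJ ℓ J := (hst w hw).1 (by rw [hwu, h0, zero_smul, add_zero])
  by_contra hxJ
  have hfix := apply_eq_self_of_mem_WJ hwJ (φ := fun i => if i = x then 1 else 0)
    fun i hi => if_neg (by rintro rfl; exact hxJ hi)
  rw [hwu, add_eq_left, smul_eq_zero, or_iff_left hu, Ssum] at hfix
  simp only [θZ, Finset.sum_boole, Nat.cast_eq_zero, Finset.card_eq_zero] at hfix
  exact Finset.notMem_empty x (hfix ▸ Finset.mem_filter.2 ⟨Finset.mem_Icc.2 ⟨hpx, hxq⟩, rfl⟩)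

end Standard

section Hooks

variable {μ : YoungDiagram} {r s : ℕ}

def hookCell (r : ℕ) (j : ℤ) : ℕ × ℕ :=
  if 0 ≤ j then (r, r + j.toNat) else (r + (-j).toNat, r)

@[simp] lemma hk_hookCell (r : ℕ) (j : ℤ) : hk (hookCell r j) = r := by
  unfold hookCell hk
  split <;> simp

@[simp] lemma rsd_hookCell (r : ℕ) (j : ℤ) : rsd (hookCell r j) = j := by
  unfold hookCell rsd
  split <;> push_cast <;> omega

lemma hookCell_hk_rsd (c : ℕ × ℕ) : hookCell (hk c) (rsd c) = c := by
  obtain ⟨i, j⟩ := c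
  unfold hookCell hk rsd
  split <;> ext <;> dsimp only <;> omega

lemma hookCell_eq_iff {j : ℤ} {c : ℕ × ℕ} : hookCell r j = c ↔ hk c = r ∧ rsd c = j := by
  constructor
  · rintro rfl
    simp
  · rintro ⟨rfl, rfl⟩
    exact hookCell_hk_rsd c

lemma arm_nonneg (hr : (r, r) ∈ μ) : 0 ≤ arm μ r := by
  have := YoungDiagram.mem_iff_lt_rowLen.1 hr
  unfold arm
  omega

lemma leg_nonneg (hr : (r, r) ∈ μ) : 0 ≤ leg μ r := by
  have := YoungDiagram.mem_iff_lt_colLen.1 hr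
  unfold leg
  omega

lemma arm_lt_of_lt (h : r < s) : arm μ s < arm μ r := by
  have := μ.rowLen_anti r s h.le
  unfold arm
  omega

lemma leg_lt_of_lt (h : r < s) : leg μ s < leg μ r := by
  have := μ.colLen_anti r s h.le
  unfold leg
  omega

lemma arm_le_of_le (h : r ≤ s) : arm μ s ≤ arm μ r :=
  h.eq_or_lt.elim (fun h => h ▸ le_rfl) fun h => (arm_lt_of_lt h).le

lemma leg_le_of_le (h : r ≤ s) : leg μ s ≤ leg μ r :=
  h.eq_or_lt.elim (fun h => h ▸ le_rfl) fun h => (leg_lt_of_lt h).le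

lemma hookCell_mem_iff (hr : (r, r) ∈ μ) (j : ℤ) :
    hookCell r j ∈ μ ↔ -leg μ r ≤ j ∧ j ≤ arm μ r := by
  have := arm_nonneg hr
  have := leg_nonneg hr
  unfold hookCell arm leg at *
  split
  · rw [YoungDiagram.mem_iff_lt_rowLen]
    omega
  · rw [YoungDiagram.mem_iff_lt_colLen]
    omega

lemma diag_mem_of_hookCell_mem {j : ℤ} (h : hookCell r j ∈ μ) : (r, r) ∈ μ := by
  unfold hookCell at h
  split at h <;> exact μ.up_left_mem (by omega) (by omega) h

end Hooks

section Removable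

variable {μ : YoungDiagram}

lemma isRemovable_of_notMem {c : ℕ × ℕ} (hc : c ∈ μ) (h₁ : (c.1 + 1, c.2) ∉ μ)
    (h₂ : (c.1, c.2 + 1) ∉ μ) : IsRemovable μ c := by
  refine ⟨hc, ⟨μ.cells.erase c, fun q p hpq hq => ?_⟩, rfl⟩
  rw [Finset.coe_erase, Set.mem_sdiff, Set.mem_singleton_iff] at hq ⊢
  refine ⟨μ.isLowerSet hpq hq.1, ?_⟩
  rintro rfl
  obtain ⟨hp1, hp2⟩ := hpq
  rcases (show p.1 < q.1 ∨ p.2 < q.2 by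
      by_contra! h
      exact hq.2 (Prod.ext (le_antisymm h.1 hp1) (le_antisymm h.2 hp2))) with h | h
  · exact h₁ (μ.up_left_mem (i2 := q.1) (j2 := q.2) h hp2 hq.1)
  · exact h₂ (μ.up_left_mem (i2 := q.1) (j2 := q.2) hp1 h hq.1)

lemma isRemovable_rowEnd {i : ℕ} (h : μ.rowLen (i + 1) < μ.rowLen i) :
    IsRemovable μ (i, μ.rowLen i - 1) := by
  refine isRemovable_of_notMem ?_ ?_ ?_ <;>
    simp only [YoungDiagram.mem_iff_lt_rowLen] <;> omega

lemma isRemovable_colEnd {i : ℕ} (h : μ.colLen (i + 1) < μ.colLen i) :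
    IsRemovable μ (μ.colLen i - 1, i) := by
  refine isRemovable_of_notMem ?_ ?_ ?_ <;>
    simp only [YoungDiagram.mem_iff_lt_colLen] <;> omega

/-- The end of the last row meeting column `r` is a removable box of the `r`-th hook. -/
lemma exists_isRemovable_of_diag {r : ℕ} (hr : (r, r) ∈ μ) :
    ∃ c, IsRemovable μ c ∧ -leg μ r ≤ rsd c ∧ rsd c ≤ arm μ r := by
  set R := μ.colLen r - 1
  have hrR : r < μ.colLen r := YoungDiagram.mem_iff_lt_colLen.1 hr
  have hRrow : r < μ.rowLen R :=
    YoungDiagram.mem_iff_lt_rowLen.1 (YoungDiagram.mem_iff_lt_colLen.2 (by omega))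
  have hnext : μ.rowLen (R + 1) ≤ r := by
    by_contra! h
    have := YoungDiagram.mem_iff_lt_colLen.1 (YoungDiagram.mem_iff_lt_rowLen.2 h)
    omega
  have := μ.rowLen_anti r R (by omega)
  refine ⟨_, isRemovable_rowEnd (i := R) (by omega), ?_, ?_⟩ <;> simp only [rsd, leg, arm] <;> omega

/-- Walking down the rows of a partition with row lengths `f`: while the content `f i - 1 - i` of
the end of row `i` satisfies `S`, that end is not a corner, so the next row is as long and the
content drops by exactly one. -/
lemma exists_content_eq_of_antitone {f : ℕ → ℕ} (hf : Antitone f) {S : ℤ → Prop}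
    (hS : ∀ i, f (i + 1) < f i → ¬ S (f i - 1 - i)) {m : ℤ} (d : ℕ) {i : ℕ}
    (hi : (f i : ℤ) - 1 - i = m + d) (hmem : ∀ x, m < x → x ≤ m + d → S x) :
    ∃ H, (f H : ℤ) - 1 - H = m := by
  induction d generalizing i with
  | zero => exact ⟨i, by simpa using hi⟩
  | succ d ih =>
    have hSi : S (f i - 1 - i) := hmem _ (by rw [hi]; push_cast; omega) (by rw [hi])
    have hrow : f (i + 1) = f i :=
      le_antisymm (hf (Nat.le_succ i)) (not_lt.1 fun h => hS i h hSi)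
    exact ih (i := i + 1) (by rw [hrow]; push_cast at hi ⊢; omega)
      fun x hx hx' => hmem x hx (by push_cast; omega)

end Removable

section JCore

variable {ℓ : ℕ} {J : Set (ZMod ℓ)} {θ : ZMod ℓ → ℂ} {μ : YoungDiagram} {r s : ℕ}

lemma exists_notMem_of_diag (hμ : IsJCore ℓ J μ) (hr : (r, r) ∈ μ) :
    ∃ x, -leg μ r ≤ x ∧ x ≤ arm μ r ∧ (x : ZMod ℓ) ∉ J :=
  let ⟨c, hc, h₁, h₂⟩ := exists_isRemovable_of_diag hr
  ⟨rsd c, h₁, h₂, fun hJ => hμ c ⟨hc, hJ⟩⟩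

lemma exists_arm_eq (hμ : IsJCore ℓ J μ) {m : ℤ} (hm : 0 ≤ m)
    (hmr : m ≤ arm μ r) (hJ : ∀ x, m < x → x ≤ arm μ r → (x : ZMod ℓ) ∈ J) :
    ∃ H, (H, H) ∈ μ ∧ arm μ H = m := by
  have hcorner : ∀ i, μ.rowLen (i + 1) < μ.rowLen i →
      ¬ (((μ.rowLen i : ℤ) - 1 - i : ℤ) : ZMod ℓ) ∈ J := by
    intro i hi hJi
    refine hμ _ ⟨isRemovable_rowEnd hi, ?_⟩
    rwa [res, show rsd (i, μ.rowLen i - 1) = (μ.rowLen i : ℤ) - 1 - i by simp only [rsd]; omega]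
  obtain ⟨H, hH⟩ := exists_content_eq_of_antitone μ.rowLen_anti hcorner (arm μ r - m).toNat
    (m := m) (i := r) (by unfold arm at hmr ⊢; omega) fun x h₁ h₂ => hJ x h₁ (by omega)
  exact ⟨H, YoungDiagram.mem_iff_lt_rowLen.2 (by omega), by unfold arm; omega⟩

lemma exists_leg_eq (hμ : IsJCore ℓ J μ) {m : ℤ} (hm : 0 ≤ m)
    (hmr : m ≤ leg μ r) (hJ : ∀ x, -leg μ r ≤ x → x < -m → (x : ZMod ℓ) ∈ J) :
    ∃ H, (H, H) ∈ μ ∧ leg μ H = m := by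
  have hcorner : ∀ i, μ.colLen (i + 1) < μ.colLen i →
      ¬ ((-((μ.colLen i : ℤ) - 1 - i) : ℤ) : ZMod ℓ) ∈ J := by
    intro i hi hJi
    refine hμ _ ⟨isRemovable_colEnd hi, ?_⟩
    rwa [res, show rsd (μ.colLen i - 1, i) = -((μ.colLen i : ℤ) - 1 - i) by simp only [rsd]; omega]
  obtain ⟨H, hH⟩ := exists_content_eq_of_antitone μ.colLen_anti hcorner (leg μ r - m).toNat
    (m := m) (i := r) (by unfold leg at hmr ⊢; omega) fun x h₁ h₂ => hJ (-x) (by omega) (by omega)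
  exact ⟨H, YoungDiagram.mem_iff_lt_colLen.2 (by omega), by unfold leg; omega⟩

variable [NeZero ℓ]

/-- If both sums vanished, all residues of the hook `max r s`, whose contents lie in
`[-leg μ r, arm μ s]`, would lie in `J`; but every hook contains a removable box. -/
lemma Ssum_arm_ne_zero_of_Ssum_leg_eq_zero (hℓ : 2 ≤ ℓ) (hst : JStandard ℓ J θ)
    (ha : ∑ i, θ i ≠ 0) (hμ : IsJCore ℓ J μ) (hr : (r, r) ∈ μ) (hs : (s, s) ∈ μ) {m : ℤ}
    (h : Ssum ℓ θ (-leg μ r) m = 0) : Ssum ℓ θ (m + 1) (arm μ s) ≠ 0 := by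
  intro h'
  obtain ⟨x, hx₁, hx₂, hxJ⟩ := exists_notMem_of_diag hμ (r := max r s)
    (by rcases max_choice r s with hm | hm <;> rw [hm] <;> assumption)
  have := leg_le_of_le (μ := μ) (le_max_left r s)
  have := arm_le_of_le (μ := μ) (le_max_right r s)
  rcases le_or_gt x m with hxm | hxm
  · exact hxJ (mem_of_Ssum_eq_zero hℓ hst ha h (by omega) hxm)
  · exact hxJ (mem_of_Ssum_eq_zero hℓ hst ha h' (by omega) (by omega))

lemma beta_ne_zero (hℓ : 2 ≤ ℓ) (hst : JStandard ℓ J θ) (ha : ∑ i, θ i ≠ 0)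
    (hμ : IsJCore ℓ J μ) (hr : (r, r) ∈ μ) : beta ℓ θ μ r ≠ 0 := fun h =>
  Ssum_arm_ne_zero_of_Ssum_leg_eq_zero hℓ hst ha hμ hr hr h
    (Ssum_eq_zero_of_lt θ (by omega))

end JCore

lemma inv_smul_add_sum_smul {K M ι : Type*} [Field K] [AddCommGroup M] [Module K M] {b : K}
    (hb : b ≠ 0) (P : K) (x : M) (S : Finset ι) (y : ι → M) :
    b⁻¹ • (P • x + ∑ t ∈ S, b • y t) = (b⁻¹ * P) • x + ∑ t ∈ S, (1 : ι → K) t • y t := by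
  rw [smul_add, smul_smul, Finset.smul_sum]
  exact congrArg _ <| Finset.sum_congr rfl fun t _ => by
    rw [smul_smul, inv_mul_cancel₀ hb, Pi.one_apply]

section Triangular

open Finset

variable {K M ι : Type*} [Field K] [AddCommGroup M] [Module K M] [LinearOrder ι]
  {C : Submodule K M} {s : Finset ι} {v : ι → M}

lemma mem_of_lower_triangular (d : ι → K) (f : ι → ι → K) (hd : ∀ r ∈ s, d r ≠ 0)
    (h : ∀ r ∈ s, d r • v r + ∑ t ∈ s with t < r, f r t • v t ∈ C) : ∀ r ∈ s, v r ∈ C := by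
  induction s using Finset.induction_on_max with
  | empty => simp
  | insert a s ha ih =>
    have hs : ∀ r ∈ s, v r ∈ C := ih (fun r hr => hd r (mem_insert_of_mem hr)) fun r hr => by
      simpa [filter_insert, not_lt.2 (ha r hr).le] using h r (mem_insert_of_mem hr)
    intro r hr
    rcases mem_insert.1 hr with rfl | hr'
    · have hr' := h r hr
      rw [filter_insert, if_neg (lt_irrefl r), filter_true_of_mem ha] at hr'
      have := sub_mem hr' (sum_mem fun t ht => C.smul_mem (f r t) (hs t ht))
      rwa [add_sub_cancel_right, C.smul_mem_iff (hd r hr)] at this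
    · exact hs r hr'

lemma mem_of_upper_triangular (d : ι → K) (f : ι → ι → K) (hd : ∀ r ∈ s, d r ≠ 0)
    (h : ∀ r ∈ s, d r • v r + ∑ t ∈ s with r < t, f r t • v t ∈ C) : ∀ r ∈ s, v r ∈ C :=
  mem_of_lower_triangular (ι := ιᵒᵈ) d f hd h

lemma sum_eq_lower_add_upper (γ : ι → K) {r : ι} (hr : r ∈ s) {p q : K} (hpq : p + q = γ r) :
    ∑ t ∈ s, γ t • v t = (p • v r + ∑ t ∈ s with t < r, γ t • v t)
      + (q • v r + ∑ t ∈ s with r < t, γ t • v t) := by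
  rw [← add_sum_erase s _ hr, ← sum_filter_add_sum_filter_not (s.erase r) (· < r), ← hpq,
    add_smul]
  have hlt : (s.erase r).filter (· < r) = s.filter (· < r) := by
    ext t
    simp only [mem_filter, mem_erase]
    exact ⟨fun h => ⟨h.1.2, h.2⟩, fun h => ⟨⟨h.2.ne, h.1⟩, h.2⟩⟩
  have hgt : (s.erase r).filter (¬ · < r) = s.filter (r < ·) := by
    ext t
    simp only [mem_filter, mem_erase, not_lt]
    exact ⟨fun h => ⟨h.1.2, lt_of_le_of_ne h.2 h.1.1.symm⟩, fun h => ⟨⟨h.2.ne', h.1⟩, h.2.le⟩⟩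
  rw [hlt, hgt]
  abel

/-- If some `p r` vanishes, all `q r'` are nonzero and one solves the upper triangular system
`∑ γ t • v t - (p r • v r + ∑_{t < r} γ t • v t) = q r • v r + ∑_{t > r} γ t • v t` instead. -/
lemma mem_of_triangular_pair {γ p q : ι → K} (hpq : ∀ r ∈ s, p r + q r = γ r)
    (hpair : ∀ r ∈ s, ∀ r' ∈ s, p r = 0 → q r' ≠ 0)
    (hL : ∀ r ∈ s, p r • v r + ∑ t ∈ s with t < r, γ t • v t ∈ C)
    (hw : (∃ r ∈ s, p r = 0) → ∑ t ∈ s, γ t • v t ∈ C) : ∀ r ∈ s, v r ∈ C := by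
  by_cases hp : ∀ r ∈ s, p r ≠ 0
  · exact mem_of_lower_triangular p (fun _ => γ) hp hL
  push Not at hp
  obtain ⟨r₀, hr₀, hp₀⟩ := hp
  refine mem_of_upper_triangular q (fun _ => γ) (fun r hr => hpair r₀ hr₀ r hr hp₀) fun r hr => ?_
  have := sub_mem (hw ⟨r₀, hr₀, hp₀⟩) (hL r hr)
  rwa [sum_eq_lower_add_upper γ hr (hpq r hr), add_sub_cancel_left] at this

end Triangular

section BasisVectors

open Finset

variable {μ : YoungDiagram} {r : ℕ} {j : ℤ}

/-- The paper's `v_{r+1,j}`, which is `0` when `hookCell r j ∉ μ` as in the paper's convention. -/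
def basisVec (μ : YoungDiagram) (r : ℕ) (j : ℤ) : V μ :=
  fun c => if hookCell r j = c then 1 else 0

/-- The hooks having a box of content `j`; `range (μ.rowLen 0)` only serves as a finite bound. -/
noncomputable def hooksAt (μ : YoungDiagram) (j : ℤ) : Finset ℕ :=
  (range (μ.rowLen 0)).filter fun r => hookCell r j ∈ μ

lemma mem_hooksAt : r ∈ hooksAt μ j ↔ hookCell r j ∈ μ := by
  refine ⟨fun h => (mem_filter.1 h).2, fun h => mem_filter.2 ⟨mem_range.2 ?_, h⟩⟩
  have h₀ : (0, r) ∈ μ := by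
    unfold hookCell at h
    split at h <;> exact μ.up_left_mem (Nat.zero_le _) (by omega) h
  exact YoungDiagram.mem_iff_lt_rowLen.1 h₀

lemma diag_mem_of_mem_hooksAt (h : r ∈ hooksAt μ j) : (r, r) ∈ μ :=
  diag_mem_of_hookCell_mem (mem_hooksAt.1 h)

lemma neg_leg_le_of_mem_hooksAt (h : r ∈ hooksAt μ j) : -leg μ r ≤ j :=
  ((hookCell_mem_iff (diag_mem_of_mem_hooksAt h) j).1 (mem_hooksAt.1 h)).1

lemma le_arm_of_mem_hooksAt (h : r ∈ hooksAt μ j) : j ≤ arm μ r :=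
  ((hookCell_mem_iff (diag_mem_of_mem_hooksAt h) j).1 (mem_hooksAt.1 h)).2

lemma basisVec_apply (c : ↥μ.cells) :
    basisVec μ r j c = if hk c = r ∧ rsd c = j then 1 else 0 := by
  simp only [basisVec, hookCell_eq_iff]

lemma basisVec_eq_zero (h : hookCell r j ∉ μ) : basisVec μ r j = 0 := by
  funext c
  refine if_neg fun hc => h ?_
  rw [hc]
  exact (YoungDiagram.mem_cells _).1 c.2

lemma basisVec_hk_rsd (c : ↥μ.cells) : basisVec μ (hk c) (rsd c) = Pi.single c 1 := by
  funext c'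
  rw [basisVec, hookCell_hk_rsd, Pi.single_apply]
  exact if_congr (by rw [eq_comm, Subtype.ext_iff]) rfl rfl

lemma sum_hooksAt_of_subset {S : Finset ℕ} (hS : hooksAt μ j ⊆ S) (f : ℕ → ℂ) :
    ∑ t ∈ S, f t • basisVec μ t j = ∑ t ∈ hooksAt μ j, f t • basisVec μ t j :=
  (sum_subset hS fun _ _ ht => by rw [basisVec_eq_zero (mt mem_hooksAt.2 ht), smul_zero]).symm

lemma sum_hooksAt_apply (P : ℕ → Prop) [DecidablePred P] (f : ℕ → ℂ) (c : ↥μ.cells) :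
    (∑ t ∈ hooksAt μ j with P t, f t • basisVec μ t j) c
      = if rsd c = j ∧ P (hk c) then f (hk c) else 0 := by
  simp only [Finset.sum_apply, Pi.smul_apply, basisVec_apply, smul_eq_mul, mul_ite, mul_one,
    mul_zero, ite_and, sum_ite_eq, mem_filter, mem_hooksAt]
  by_cases hc : rsd c = j
  · subst hc
    simp [hookCell_hk_rsd, (YoungDiagram.mem_cells _).1 c.2]
  · simp [hc]

lemma matMap_basisVec (K : ℕ × ℕ → ℕ × ℕ → ℂ) (h : hookCell r j ∈ μ) :
    matMap μ K (basisVec μ r j) = fun c : ↥μ.cells => K (hookCell r j) c := by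
  funext c
  change ∑ c' : ↥μ.cells, K c' c * basisVec μ r j c' = _
  rw [sum_eq_single ⟨hookCell r j, h⟩ (fun c' _ hc' => ?_) (by simp), basisVec, if_pos rfl, mul_one]
  rw [basisVec, if_neg fun h' => hc' (Subtype.ext h'.symm), mul_zero]

end BasisVectors

section Actions

open Finset

variable {ℓ : ℕ} {θ : ZMod ℓ → ℂ} {μ : YoungDiagram} {r : ℕ} {j : ℤ}

noncomputable def XmapT (μ : YoungDiagram) : V μ →ₗ[ℂ] V μ := matMap μ fun c c' => cX c' c

noncomputable def YmapT (ℓ : ℕ) (θ : ZMod ℓ → ℂ) (μ : YoungDiagram) : V μ →ₗ[ℂ] V μ :=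
  matMap μ fun c c' => cY ℓ θ μ c' c

lemma Xmap_basisVec (h : hookCell r j ∈ μ) : Xmap μ (basisVec μ r j) = basisVec μ r (j - 1) := by
  rw [Xmap, matMap_basisVec _ h]
  funext c
  simp only [cX, hk_hookCell, rsd_hookCell, basisVec_apply]

lemma XmapT_basisVec (h : hookCell r j ∈ μ) : XmapT μ (basisVec μ r j) = basisVec μ r (j + 1) := by
  rw [XmapT, matMap_basisVec _ h]
  funext c
  simp only [cX, hk_hookCell, rsd_hookCell, basisVec_apply]
  exact if_congr (by constructor <;> rintro ⟨h₁, h₂⟩ <;> exact ⟨h₁.symm, by omega⟩) rfl rfl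

lemma Ymap_basisVec_of_nonpos (hj : j ≤ 0) (hr : r ∈ hooksAt μ j) :
    Ymap ℓ θ μ (basisVec μ r (j - 1)) = Ssum ℓ θ (-leg μ r) (j - 1) • basisVec μ r j
      + ∑ t ∈ hooksAt μ j with r < t, beta ℓ θ μ t • basisVec μ t j := by
  by_cases h : hookCell r (j - 1) ∈ μ
  · rw [Ymap, matMap_basisVec _ h]
    funext c
    simp only [Pi.add_apply, Pi.smul_apply, basisVec_apply, sum_hooksAt_apply, cY, hk_hookCell,
      rsd_hookCell, smul_eq_mul]
    split_ifs <;> first | omega | grind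
  · have hleg : -leg μ r = j := by
      have := neg_leg_le_of_mem_hooksAt hr
      have := le_arm_of_mem_hooksAt hr
      rw [hookCell_mem_iff (diag_mem_of_mem_hooksAt hr)] at h
      omega
    rw [basisVec_eq_zero h, map_zero, Ssum_eq_zero_of_lt θ (by omega), zero_smul, zero_add,
      eq_comm]
    refine sum_eq_zero fun t ht => absurd (neg_leg_le_of_mem_hooksAt (mem_filter.1 ht).1) ?_
    have := leg_lt_of_lt (μ := μ) (mem_filter.1 ht).2
    omega

lemma Ymap_basisVec_of_pos (hj : 0 < j) (hr : r ∈ hooksAt μ (j - 1)) :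
    Ymap ℓ θ μ (basisVec μ r (j - 1)) = -(Ssum ℓ θ j (arm μ r) • basisVec μ r j
      + ∑ t ∈ hooksAt μ j with t < r, beta ℓ θ μ t • basisVec μ t j) := by
  rw [Ymap, matMap_basisVec _ (mem_hooksAt.1 hr)]
  funext c
  simp only [Pi.neg_apply, Pi.add_apply, Pi.smul_apply, basisVec_apply, sum_hooksAt_apply, cY,
    hk_hookCell, rsd_hookCell, smul_eq_mul]
  split_ifs <;> first | omega | grind

lemma YmapT_basisVec_of_neg (hj : j < 0) (hr : r ∈ hooksAt μ (j + 1)) :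
    YmapT ℓ θ μ (basisVec μ r (j + 1)) = Ssum ℓ θ (-leg μ r) j • basisVec μ r j
      + ∑ t ∈ hooksAt μ j with t < r, beta ℓ θ μ r • basisVec μ t j := by
  rw [YmapT, matMap_basisVec _ (mem_hooksAt.1 hr)]
  funext c
  simp only [Pi.add_apply, Pi.smul_apply, basisVec_apply, sum_hooksAt_apply, cY,
    hk_hookCell, rsd_hookCell, smul_eq_mul]
  split_ifs <;> first | omega | grind

lemma YmapT_basisVec_of_nonneg (hj : 0 ≤ j) (hr : r ∈ hooksAt μ j) :
    YmapT ℓ θ μ (basisVec μ r (j + 1)) = -(Ssum ℓ θ (j + 1) (arm μ r) • basisVec μ r j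
      + ∑ t ∈ hooksAt μ j with r < t, beta ℓ θ μ r • basisVec μ t j) := by
  by_cases h : hookCell r (j + 1) ∈ μ
  · rw [YmapT, matMap_basisVec _ h]
    funext c
    simp only [Pi.neg_apply, Pi.add_apply, Pi.smul_apply, basisVec_apply, sum_hooksAt_apply, cY,
      hk_hookCell, rsd_hookCell, smul_eq_mul]
    split_ifs <;> first | omega | grind
  · have harm : arm μ r = j := by
      have := neg_leg_le_of_mem_hooksAt hr
      have := le_arm_of_mem_hooksAt hr
      rw [hookCell_mem_iff (diag_mem_of_mem_hooksAt hr)] at h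
      omega
    rw [basisVec_eq_zero h, map_zero, Ssum_eq_zero_of_lt θ (by omega), zero_smul, zero_add,
      eq_comm, neg_eq_zero]
    refine sum_eq_zero fun t ht => absurd (le_arm_of_mem_hooksAt (mem_filter.1 ht).1) ?_
    have := arm_lt_of_lt (μ := μ) (mem_filter.1 ht).2
    omega

end Actions

section LevelVectors

open Finset

variable {ℓ : ℕ} {θ : ZMod ℓ → ℂ} {μ : YoungDiagram} {j : ℤ}

noncomputable def levelVec (μ : YoungDiagram) (f : ℕ → ℂ) (j : ℤ) : V μ :=
  ∑ r ∈ hooksAt μ j, f r • basisVec μ r j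

lemma levelVec_apply (f : ℕ → ℂ) (c : ↥μ.cells) :
    levelVec μ f j c = if rsd c = j then f (hk c) else 0 := by
  simpa [levelVec] using sum_hooksAt_apply (μ := μ) (j := j) (fun _ => True) f c

lemma hk_mem_hooksAt (c : ↥μ.cells) : hk c ∈ hooksAt μ (rsd c) :=
  mem_hooksAt.2 (by rw [hookCell_hk_rsd]; exact (YoungDiagram.mem_cells _).1 c.2)

lemma hooksAt_sub_one_subset (hj : j ≤ 0) : hooksAt μ (j - 1) ⊆ hooksAt μ j := fun r hr => by
  have := neg_leg_le_of_mem_hooksAt hr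
  have := arm_nonneg (diag_mem_of_mem_hooksAt hr)
  exact mem_hooksAt.2 ((hookCell_mem_iff (diag_mem_of_mem_hooksAt hr) _).2 ⟨by omega, by omega⟩)

lemma hooksAt_add_one_subset (hj : 0 ≤ j) : hooksAt μ (j + 1) ⊆ hooksAt μ j := fun r hr => by
  have := le_arm_of_mem_hooksAt hr
  have := leg_nonneg (diag_mem_of_mem_hooksAt hr)
  exact mem_hooksAt.2 ((hookCell_mem_iff (diag_mem_of_mem_hooksAt hr) _).2 ⟨by omega, by omega⟩)

lemma Xmap_levelVec (hj : j ≤ 0) (f : ℕ → ℂ) : Xmap μ (levelVec μ f j) = levelVec μ f (j - 1) := by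
  rw [levelVec, map_sum, levelVec, ← sum_hooksAt_of_subset (hooksAt_sub_one_subset hj)]
  exact sum_congr rfl fun r hr => by rw [map_smul, Xmap_basisVec (mem_hooksAt.1 hr)]

lemma XmapT_levelVec (hj : 0 ≤ j) (f : ℕ → ℂ) :
    XmapT μ (levelVec μ f j) = levelVec μ f (j + 1) := by
  rw [levelVec, map_sum, levelVec, ← sum_hooksAt_of_subset (hooksAt_add_one_subset hj)]
  exact sum_congr rfl fun r hr => by rw [map_smul, XmapT_basisVec (mem_hooksAt.1 hr)]

lemma xmap_one : xmap ℓ θ μ 1 = -levelVec μ (beta ℓ θ μ) 0 := by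
  funext c
  rw [Pi.neg_apply, levelVec_apply]
  change (if rsd (c : ℕ × ℕ) = 0 then -beta ℓ θ μ (hk c) * 1 else 0) = _
  split_ifs <;> simp

lemma ymap_eq_dotProduct (f : V μ) : ymap μ f = f ⬝ᵥ levelVec μ 1 0 := by
  simp only [ymap, LinearMap.coe_mk, AddHom.coe_mk, dotProduct, levelVec_apply, Pi.one_apply,
    mul_ite, mul_one, mul_zero]

end LevelVectors

section LevelSteps

open Finset

variable {ℓ : ℕ} [NeZero ℓ] {J : Set (ZMod ℓ)} {θ : ZMod ℓ → ℂ} {μ : YoungDiagram} {j : ℤ}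
  {C : Submodule ℂ (V μ)}

lemma basisVec_mem_of_forall_mem_hooksAt (h : ∀ r ∈ hooksAt μ j, basisVec μ r j ∈ C) (r : ℕ) :
    basisVec μ r j ∈ C := by
  by_cases hr : hookCell r j ∈ μ
  · exact h r (mem_hooksAt.2 hr)
  · rw [basisVec_eq_zero hr]
    exact C.zero_mem

/-- It is `-Y v_{H,j-1}` for the hook `H` with arm `j - 1` provided by `exists_arm_eq`. -/
lemma levelVec_beta_mem_of_Ssum_eq_zero (hℓ : 2 ≤ ℓ) (hst : JStandard ℓ J θ)
    (ha : ∑ i, θ i ≠ 0) (hμ : IsJCore ℓ J μ) (hY : ∀ f ∈ C, Ymap ℓ θ μ f ∈ C) (hj : 0 < j)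
    (hprev : ∀ r ∈ hooksAt μ (j - 1), basisVec μ r (j - 1) ∈ C) {r : ℕ} (hr : r ∈ hooksAt μ j)
    (hp : Ssum ℓ θ j (arm μ r) = 0) : levelVec μ (beta ℓ θ μ) j ∈ C := by
  obtain ⟨H, hH, harm⟩ := exists_arm_eq hμ (m := j - 1) (by omega)
    (by have := le_arm_of_mem_hooksAt hr; omega)
    fun x h₁ h₂ => mem_of_Ssum_eq_zero hℓ hst ha hp (by omega) h₂
  have hH' : H ∈ hooksAt μ (j - 1) :=
    mem_hooksAt.2 ((hookCell_mem_iff hH _).2 ⟨by have := leg_nonneg hH; omega, by omega⟩)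
  have hlt : ∀ t ∈ hooksAt μ j, t < H := fun t ht => by
    by_contra! h
    have := arm_le_of_le (μ := μ) h
    have := le_arm_of_mem_hooksAt ht
    omega
  have := C.neg_mem (hY _ (hprev H hH'))
  rwa [Ymap_basisVec_of_pos hj hH', neg_neg, Ssum_eq_zero_of_lt θ (by omega), zero_smul,
    zero_add, filter_true_of_mem hlt] at this

/-- The vectors `Y v_{r,j-1}` and `levelVec μ β j` give the two triangular systems of
`mem_of_triangular_pair`, whose diagonals are the parts of `β_r` below and above the cut at `j`. -/
lemma basisVec_mem_of_Ymap_stable (hℓ : 2 ≤ ℓ) (hst : JStandard ℓ J θ) (ha : ∑ i, θ i ≠ 0)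
    (hμ : IsJCore ℓ J μ) (hY : ∀ f ∈ C, Ymap ℓ θ μ f ∈ C)
    (hw : j ≤ 0 → levelVec μ (beta ℓ θ μ) j ∈ C)
    (hprev : ∀ r ∈ hooksAt μ (j - 1), basisVec μ r (j - 1) ∈ C) :
    ∀ r ∈ hooksAt μ j, basisVec μ r j ∈ C := by
  have hYmem r : Ymap ℓ θ μ (basisVec μ r (j - 1)) ∈ C :=
    hY _ (basisVec_mem_of_forall_mem_hooksAt hprev r)
  have hsplit : ∀ r ∈ hooksAt μ j,
      Ssum ℓ θ j (arm μ r) + Ssum ℓ θ (-leg μ r) (j - 1) = beta ℓ θ μ r := fun r hr => by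
    have := neg_leg_le_of_mem_hooksAt hr
    have := le_arm_of_mem_hooksAt hr
    rw [add_comm, beta, Ssum_split θ (p := -leg μ r) (m := j - 1) (q := arm μ r) (by omega)
      (by omega), sub_add_cancel]
  refine mem_of_triangular_pair hsplit (fun r hr r' hr' hp hq =>
    Ssum_arm_ne_zero_of_Ssum_leg_eq_zero hℓ hst ha hμ (diag_mem_of_mem_hooksAt hr')
      (diag_mem_of_mem_hooksAt hr) hq (by rwa [sub_add_cancel])) (fun r hr => ?_) ?_
  · rcases le_or_gt j 0 with hj | hj
    · have := sub_mem (hw hj) (hYmem r)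
      rwa [levelVec, sum_eq_lower_add_upper _ hr (hsplit r hr), Ymap_basisVec_of_nonpos hj hr,
        add_sub_cancel_right] at this
    · have hr' : r ∈ hooksAt μ (j - 1) :=
        hooksAt_add_one_subset (j := j - 1) (by omega) (by rwa [sub_add_cancel])
      simpa [Ymap_basisVec_of_pos hj hr'] using C.neg_mem (hYmem r)
  · rintro ⟨r, hr, hp⟩
    rcases le_or_gt j 0 with hj | hj
    · exact hw hj
    · exact levelVec_beta_mem_of_Ssum_eq_zero hℓ hst ha hμ hY hj hprev hr hp

/-- It is `β_H⁻¹ • Yᵀ v_{H,j+1}` for the hook `H` with leg `-j - 1` provided by `exists_leg_eq`. -/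
lemma levelVec_one_mem_of_Ssum_eq_zero (hℓ : 2 ≤ ℓ) (hst : JStandard ℓ J θ)
    (ha : ∑ i, θ i ≠ 0) (hμ : IsJCore ℓ J μ) (hY : ∀ f ∈ C, YmapT ℓ θ μ f ∈ C) (hj : j < 0)
    (hprev : ∀ r ∈ hooksAt μ (j + 1), basisVec μ r (j + 1) ∈ C) {r : ℕ} (hr : r ∈ hooksAt μ j)
    (hp : Ssum ℓ θ (-leg μ r) j = 0) : levelVec μ 1 j ∈ C := by
  obtain ⟨H, hH, hleg⟩ := exists_leg_eq hμ (m := -j - 1) (by omega)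
    (by have := neg_leg_le_of_mem_hooksAt hr; omega)
    fun x h₁ h₂ => mem_of_Ssum_eq_zero hℓ hst ha hp h₁ (by omega)
  have hH' : H ∈ hooksAt μ (j + 1) :=
    mem_hooksAt.2 ((hookCell_mem_iff hH _).2 ⟨by omega, by have := arm_nonneg hH; omega⟩)
  have hlt : ∀ t ∈ hooksAt μ j, t < H := fun t ht => by
    by_contra! h
    have := leg_le_of_le (μ := μ) h
    have := neg_leg_le_of_mem_hooksAt ht
    omega
  have := C.smul_mem (beta ℓ θ μ H)⁻¹ (hY _ (hprev H hH'))
  rwa [YmapT_basisVec_of_neg hj hH', Ssum_eq_zero_of_lt θ (by omega),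
    inv_smul_add_sum_smul (beta_ne_zero hℓ hst ha hμ hH), mul_zero, zero_smul, zero_add,
    filter_true_of_mem hlt] at this

/-- As `basisVec_mem_of_Ymap_stable`, with the vectors `β_r⁻¹ • Yᵀ v_{r,j+1}` and
`levelVec μ 1 j`. -/
lemma basisVec_mem_of_YmapT_stable (hℓ : 2 ≤ ℓ) (hst : JStandard ℓ J θ) (ha : ∑ i, θ i ≠ 0)
    (hμ : IsJCore ℓ J μ) (hY : ∀ f ∈ C, YmapT ℓ θ μ f ∈ C)
    (hw : 0 ≤ j → levelVec μ 1 j ∈ C)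
    (hprev : ∀ r ∈ hooksAt μ (j + 1), basisVec μ r (j + 1) ∈ C) :
    ∀ r ∈ hooksAt μ j, basisVec μ r j ∈ C := by
  have hYmem r : YmapT ℓ θ μ (basisVec μ r (j + 1)) ∈ C :=
    hY _ (basisVec_mem_of_forall_mem_hooksAt hprev r)
  have hβ : ∀ r ∈ hooksAt μ j, beta ℓ θ μ r ≠ 0 := fun r hr =>
    beta_ne_zero hℓ hst ha hμ (diag_mem_of_mem_hooksAt hr)
  have hsplit : ∀ r ∈ hooksAt μ j,
      (beta ℓ θ μ r)⁻¹ * Ssum ℓ θ (-leg μ r) j + (beta ℓ θ μ r)⁻¹ * Ssum ℓ θ (j + 1) (arm μ r)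
        = (1 : ℕ → ℂ) r := fun r hr => by
    have := neg_leg_le_of_mem_hooksAt hr
    have := le_arm_of_mem_hooksAt hr
    rw [← mul_add, ← Ssum_split θ (by omega) (by omega), ← beta, inv_mul_cancel₀ (hβ r hr),
      Pi.one_apply]
  refine mem_of_triangular_pair hsplit (fun r hr r' hr' hp hq => ?_) (fun r hr => ?_) ?_
  · rw [mul_eq_zero, inv_eq_zero] at hp hq
    exact Ssum_arm_ne_zero_of_Ssum_leg_eq_zero hℓ hst ha hμ (diag_mem_of_mem_hooksAt hr)
      (diag_mem_of_mem_hooksAt hr') (hp.resolve_left (hβ r hr)) (hq.resolve_left (hβ r' hr'))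
  · rcases lt_or_ge j 0 with hj | hj
    · have hr' : r ∈ hooksAt μ (j + 1) := hooksAt_sub_one_subset (j := j + 1) (by omega)
        (by rwa [add_sub_cancel_right])
      have := C.smul_mem (beta ℓ θ μ r)⁻¹ (hYmem r)
      rwa [YmapT_basisVec_of_neg hj hr', inv_smul_add_sum_smul (hβ r hr)] at this
    · have := sub_mem (hw hj) (C.smul_mem (-(beta ℓ θ μ r)⁻¹) (hYmem r))
      rwa [YmapT_basisVec_of_nonneg hj hr, neg_smul_neg, inv_smul_add_sum_smul (hβ r hr),
        levelVec, sum_eq_lower_add_upper _ hr (hsplit r hr), add_sub_cancel_right] at this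
  · rintro ⟨r, hr, hp⟩
    rcases lt_or_ge j 0 with hj | hj
    · rw [mul_eq_zero, inv_eq_zero, or_iff_right (hβ r hr)] at hp
      exact levelVec_one_mem_of_Ssum_eq_zero hℓ hst ha hμ hY hj hprev hr hp
    · exact hw hj

end LevelSteps

section Simplicity

open Finset

variable {ℓ : ℕ} [NeZero ℓ] {J : Set (ZMod ℓ)} {θ : ZMod ℓ → ℂ} {μ : YoungDiagram}
  {C : Submodule ℂ (V μ)}

lemma notMem_hooksAt_of_lt {r : ℕ} {j : ℤ} (hj : j < -leg μ 0) : r ∉ hooksAt μ j := fun hr => by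
  have := neg_leg_le_of_mem_hooksAt hr
  have := leg_le_of_le (μ := μ) (Nat.zero_le r)
  omega

lemma notMem_hooksAt_of_gt {r : ℕ} {j : ℤ} (hj : arm μ 0 < j) : r ∉ hooksAt μ j := fun hr => by
  have := le_arm_of_mem_hooksAt hr
  have := arm_le_of_le (μ := μ) (Nat.zero_le r)
  omega

lemma eq_top_of_basisVec_mem (h : ∀ j, ∀ r ∈ hooksAt μ j, basisVec μ r j ∈ C) : C = ⊤ := by
  rw [Submodule.eq_top_iff_forall_basis_mem (Pi.basisFun ℂ _)]
  intro c
  rw [Pi.basisFun_apply, ← basisVec_hk_rsd]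
  exact h _ _ (hk_mem_hooksAt c)

lemma eq_top_of_Xmap_Ymap_stable (hℓ : 2 ≤ ℓ) (hst : JStandard ℓ J θ) (ha : ∑ i, θ i ≠ 0)
    (hμ : IsJCore ℓ J μ) (hX : ∀ f ∈ C, Xmap μ f ∈ C) (hY : ∀ f ∈ C, Ymap ℓ θ μ f ∈ C)
    (hx : xmap ℓ θ μ 1 ∈ C) : C = ⊤ := by
  have hw : ∀ j ≤ 0, levelVec μ (beta ℓ θ μ) j ∈ C := fun j hj => by
    induction j, hj using Int.leInductionDown with
    | base => simpa [xmap_one] using C.neg_mem hx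
    | pred j hj ih => exact Xmap_levelVec hj _ ▸ hX _ ih
  refine eq_top_of_basisVec_mem fun j => Int.inductionOn' j (-leg μ 0 - 1)
    (fun r hr => absurd hr (notMem_hooksAt_of_lt (by omega))) (fun k _ ih => ?_)
    (fun k hk _ r hr => absurd hr (notMem_hooksAt_of_lt (by omega)))
  exact basisVec_mem_of_Ymap_stable hℓ hst ha hμ hY (hw _) (by simpa using ih)

lemma eq_top_of_XmapT_YmapT_stable (hℓ : 2 ≤ ℓ) (hst : JStandard ℓ J θ) (ha : ∑ i, θ i ≠ 0)
    (hμ : IsJCore ℓ J μ) (hX : ∀ f ∈ C, XmapT μ f ∈ C) (hY : ∀ f ∈ C, YmapT ℓ θ μ f ∈ C)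
    (hy : levelVec μ 1 0 ∈ C) : C = ⊤ := by
  have hw : ∀ j, 0 ≤ j → levelVec μ 1 j ∈ C := fun j hj => by
    induction j, hj using Int.leInduction with
    | base => exact hy
    | succ j hj ih => exact XmapT_levelVec hj _ ▸ hX _ ih
  refine eq_top_of_basisVec_mem fun j => Int.inductionOn' j (arm μ 0 + 1)
    (fun r hr => absurd hr (notMem_hooksAt_of_gt (by omega)))
    (fun k hk _ r hr => absurd hr (notMem_hooksAt_of_gt (by omega))) (fun k _ ih => ?_)
  exact basisVec_mem_of_YmapT_stable hℓ hst ha hμ hY (hw _) (by simpa using ih)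

lemma dotProduct_matMap (K : ℕ × ℕ → ℕ × ℕ → ℂ) (f g : V μ) :
    matMap μ K f ⬝ᵥ g = f ⬝ᵥ matMap μ (fun c c' => K c' c) g := by
  simp only [matMap, LinearMap.coe_mk, AddHom.coe_mk, dotProduct, sum_mul, mul_sum]
  rw [sum_comm]
  exact sum_congr rfl fun _ _ => sum_congr rfl fun _ _ => by ring

lemma matMap_mem_orthogonal (K : ℕ × ℕ → ℕ × ℕ → ℂ) (hC : ∀ f ∈ C, matMap μ K f ∈ C) :
    ∀ g ∈ C.orthogonalBilin (dotProductBilin ℂ ℂ),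
      matMap μ (fun c c' => K c' c) g ∈ C.orthogonalBilin (dotProductBilin ℂ ℂ) := by
  intro g hg f hf
  simpa [← dotProduct_matMap] using hg _ (hC f hf)

/-- The annihilator of `C` for the dot product is stable under the transposes and contains the
covector of `y`. -/
lemma eq_bot_of_Xmap_Ymap_stable (hℓ : 2 ≤ ℓ) (hst : JStandard ℓ J θ) (ha : ∑ i, θ i ≠ 0)
    (hμ : IsJCore ℓ J μ) (hX : ∀ f ∈ C, Xmap μ f ∈ C) (hY : ∀ f ∈ C, Ymap ℓ θ μ f ∈ C)
    (hy : ∀ f ∈ C, ymap μ f = 0) : C = ⊥ := by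
  have htop := eq_top_of_XmapT_YmapT_stable hℓ hst ha hμ (matMap_mem_orthogonal _ hX)
    (matMap_mem_orthogonal _ hY) fun f hf => by
      simpa [← ymap_eq_dotProduct] using hy f hf
  refine (Submodule.eq_bot_iff C).2 fun f hf => funext fun c => ?_
  have := (htop ▸ Submodule.mem_top : Pi.single c 1 ∈ C.orthogonalBilin (dotProductBilin ℂ ℂ)) f hf
  simpa using this

end Simplicity

lemma apply_mem_iSup {R M ι : Type*} [Semiring R] [AddCommMonoid M] [Module R M]
    {U : ι → Submodule R M} {f : M →ₗ[R] M} (σ : ι → ι) (h : ∀ i, ∀ v ∈ U i, f v ∈ U (σ i)) :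
    ∀ v ∈ ⨆ i, U i, f v ∈ ⨆ i, U i :=
  fun _ hv => (iSup_le fun i v hv => le_iSup U (σ i) (h i v hv) :
    (⨆ i, U i) ≤ (⨆ i, U i).comap f) hv

section Residues

variable {ℓ : ℕ} {μ : YoungDiagram} {i : ZMod ℓ} {v : V μ}

lemma ymap_eq_zero_of_mem_Vmod (hi : i ≠ 0) (hv : v ∈ Vmod ℓ μ i) : ymap μ v = 0 :=
  Finset.sum_eq_zero fun c _ => by
    split_ifs with h
    · exact hv c fun hc => hi (by rw [← hc, res, h, Int.cast_zero])
    · rfl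

noncomputable def resProj (ℓ : ℕ) (μ : YoungDiagram) (i : ZMod ℓ) : V μ →ₗ[ℂ] V μ where
  toFun f c := if res ℓ c = i then f c else 0
  map_add' f g := by
    funext c
    by_cases h : res ℓ c = i <;> simp [h]
  map_smul' a f := by
    funext c
    by_cases h : res ℓ c = i <;> simp [h]

lemma resProj_of_mem (hv : v ∈ Vmod ℓ μ i) : resProj ℓ μ i v = v := by
  funext c
  change (if res ℓ c = i then v c else 0) = v c
  split_ifs with h
  · rfl
  · exact (hv c h).symm

lemma resProj_of_mem_of_ne {i' : ZMod ℓ} (hv : v ∈ Vmod ℓ μ i') (hi : i' ≠ i) :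
    resProj ℓ μ i v = 0 := by
  funext c
  change (if res ℓ c = i then v c else 0) = 0
  split_ifs with h
  · exact hv c (h ▸ hi.symm)
  · rfl

lemma mem_of_mem_iSup_of_mem_Vmod {U : ZMod ℓ → Submodule ℂ (V μ)} (hle : ∀ i, U i ≤ Vmod ℓ μ i)
    (hv : v ∈ ⨆ i, U i) (hvi : v ∈ Vmod ℓ μ i) : v ∈ U i := by
  have : (⨆ i', U i') ≤ (U i).comap (resProj ℓ μ i) := iSup_le fun i' w hw => by
    by_cases hi : i' = i
    · subst hi
      rw [Submodule.mem_comap, resProj_of_mem (hle _ hw)]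
      exact hw
    · rw [Submodule.mem_comap, resProj_of_mem_of_ne (hle _ hw) hi]
      exact (U i).zero_mem
  simpa [resProj_of_mem hvi] using this hv

lemma ymap_eq_zero_of_mem_iSup {U : ZMod ℓ → Submodule ℂ (V μ)} (hle : ∀ i, U i ≤ Vmod ℓ μ i)
    (h₀ : ∀ v ∈ U 0, ymap μ v = 0) (hv : v ∈ ⨆ i, U i) : ymap μ v = 0 := by
  have : (⨆ i, U i) ≤ LinearMap.ker (ymap μ) := iSup_le fun i w hw => by
    by_cases hi : i = 0
    · subst hi
      exact h₀ w hw
    · exact ymap_eq_zero_of_mem_Vmod hi (hle i hw)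
  exact this hv

end Residues

/-- If `θ` is `J`-standard with `∑ θ_i ≠ 0` and the partition `μ` is a
`J`-core, then the framed `θ`-representation `A_μ` is simple: its only subrepresentations
are zero and the whole of `A_μ`. -/
theorem amu_simple_of_jcore (ℓ : ℕ) [NeZero ℓ] (hℓ : 2 ≤ ℓ) (J : Set (ZMod ℓ))
    (θ : ZMod ℓ → ℂ) (hst : JStandard ℓ J θ) (ha : ∑ i : ZMod ℓ, θ i ≠ 0)
    (μ : YoungDiagram) (hμ : IsJCore ℓ J μ)
    (U : ZMod ℓ → Submodule ℂ (V μ)) (Uinf : Submodule ℂ ℂ)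
    (hle : ∀ i, U i ≤ Vmod ℓ μ i)
    (hX : ∀ i : ZMod ℓ, ∀ v ∈ U i, Xmap μ v ∈ U (i - 1))
    (hY : ∀ i : ZMod ℓ, ∀ v ∈ U i, Ymap ℓ θ μ v ∈ U (i + 1))
    (hx : ∀ z ∈ Uinf, xmap ℓ θ μ z ∈ U 0)
    (hy : ∀ v ∈ U 0, ymap μ v ∈ Uinf) :
    ((∀ i, U i = ⊥) ∧ Uinf = ⊥) ∨ ((∀ i, U i = Vmod ℓ μ i) ∧ Uinf = ⊤) := by
  have hXU := apply_mem_iSup (fun i => i - 1) hX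
  have hYU := apply_mem_iSup (fun i => i + 1) hY
  rcases Ideal.eq_bot_or_top Uinf with hbot | htop
  · have hU := eq_bot_of_Xmap_Ymap_stable hℓ hst ha hμ hXU hYU fun v hv =>
      ymap_eq_zero_of_mem_iSup hle (fun w hw => by simpa [hbot] using hy w hw) hv
    exact Or.inl ⟨fun i => eq_bot_iff.2 (hU ▸ le_iSup U i), hbot⟩
  · have hU := eq_top_of_Xmap_Ymap_stable hℓ hst ha hμ hXU hYU
      (le_iSup U 0 (hx 1 (htop ▸ Submodule.mem_top)))
    exact Or.inr ⟨fun i => le_antisymm (hle i) fun v hv =>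
      mem_of_mem_iSup_of_mem_Vmod hle (hU ▸ Submodule.mem_top) hv, htop⟩

end CM
end
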